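/- arXiv:1812.06706 — 9 statements merged into one kernel-verified Lean document; each statement's English description precedes it below -/
import Mathlib

section
/- In any edge-coloring of the complete graph K_4 using at least 4 distinct colors, there exists a rainbow P_4, i.e., a path on all 4 vertices whose three edges receive three pairwise distinct colors. -/
/-!
The two end edges of a path `x-y-z-w` on the four vertices of `K₄` form a perfect matching
`{xy, zw}`, and conversely every edge outside a perfect matching joins its two edges, so it
completes the matching to a spanning path. If each of the three perfect matchings were
monochromatic there would be at most three colors. Hence some matching `{xy, zw}` carries two
colors, a further color sits on an edge outside it, and that edge closes a rainbow path.
-/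

section

variable {V C : Type*}

def IsRainbowPath (c : Sym2 V → C) (x y z w : V) : Prop :=
  x ≠ y ∧ x ≠ z ∧ x ≠ w ∧ y ≠ z ∧ y ≠ w ∧ z ≠ w ∧
    c s(x, y) ≠ c s(y, z) ∧ c s(y, z) ≠ c s(z, w) ∧ c s(x, y) ≠ c s(z, w)

lemma eq_or_eq_or_eq_or_eq_of_card_eq_four [Fintype V] (hV : Fintype.card V = 4) {x y z w : V}
    (hxy : x ≠ y) (hxz : x ≠ z) (hxw : x ≠ w) (hyz : y ≠ z) (hyw : y ≠ w) (hzw : z ≠ w)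
    (v : V) : v = x ∨ v = y ∨ v = z ∨ v = w := by
  classical
  have huniv : ({x, y, z, w} : Finset V) = Finset.univ :=
    Finset.eq_univ_of_card _ <|
      hV ▸ Finset.card_eq_four.2 ⟨x, y, z, w, hxy, hxz, hxw, hyz, hyw, hzw, rfl⟩
  simpa using Finset.eq_univ_iff_forall.1 huniv v

lemma ncard_edgeColors_le_three [Fintype V] (hV : Fintype.card V = 4) (c : Sym2 V → C)
    (hmono : ∀ x y z w : V, x ≠ y → x ≠ z → x ≠ w → y ≠ z → y ≠ w → z ≠ w →
      c s(x, y) = c s(z, w)) :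
    Set.ncard {col : C | ∃ u v : V, u ≠ v ∧ c s(u, v) = col} ≤ 3 := by
  classical
  obtain ⟨a⟩ : Nonempty V := Fintype.card_pos_iff.1 (by omega)
  -- Each edge has the color of an edge at `a`: itself, or its partner in a perfect matching.
  set star : Finset C := (Finset.univ.erase a).image fun w => c s(a, w)
  have hsub : {col : C | ∃ u v : V, u ≠ v ∧ c s(u, v) = col} ⊆ star := by
    rintro _ ⟨u, v, huv, rfl⟩
    simp only [star, Finset.coe_image, Finset.coe_erase, Finset.coe_univ, Set.mem_image,
      Set.mem_sdiff, Set.mem_univ, Set.mem_singleton_iff, true_and]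
    by_cases hu : u = a
    · exact ⟨v, hu ▸ huv.symm, hu ▸ rfl⟩
    by_cases hv : v = a
    · exact ⟨u, hu, hv ▸ Sym2.eq_swap ▸ rfl⟩
    obtain ⟨w, -, hw⟩ := Finset.exists_mem_notMem_of_card_lt_card
      (s := {a, u, v}) (t := Finset.univ) (Finset.card_le_three.trans_lt (by simp [hV]))
    simp only [Finset.mem_insert, Finset.mem_singleton, not_or] at hw
    exact ⟨w, hw.1, hmono a w u v (Ne.symm hw.1) (Ne.symm hu) (Ne.symm hv) hw.2.1 hw.2.2 huv⟩
  calc _ ≤ (star : Set C).ncard := Set.ncard_le_ncard hsub star.finite_toSet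
    _ = star.card := Set.ncard_coe_finset _
    _ ≤ (Finset.univ.erase a).card := Finset.card_image_le
    _ = 3 := by simp [hV]

lemma exists_isRainbowPath_of_cross_edge (c : Sym2 V → C) {x y z w u v : V}
    (hxy : x ≠ y) (hxz : x ≠ z) (hxw : x ≠ w) (hyz : y ≠ z) (hyw : y ≠ w) (hzw : z ≠ w)
    (hu : u = x ∨ u = y) (hv : v = z ∨ v = w) (hmatch : c s(x, y) ≠ c s(z, w))
    (hux : c s(u, v) ≠ c s(x, y)) (huz : c s(u, v) ≠ c s(z, w)) :
    ∃ a b d e, IsRainbowPath c a b d e := by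
  rcases hu with rfl | rfl <;> rcases hv with rfl | rfl
  · exact ⟨y, u, v, w, by simp_all [IsRainbowPath, Sym2.eq_swap, Ne.symm]⟩
  · exact ⟨y, u, v, z, by simp_all [IsRainbowPath, Sym2.eq_swap, Ne.symm]⟩
  · exact ⟨x, u, v, w, by simp_all [IsRainbowPath, Sym2.eq_swap, Ne.symm]⟩
  · exact ⟨x, u, v, z, by simp_all [IsRainbowPath, Sym2.eq_swap, Ne.symm]⟩

lemma exists_isRainbowPath_of_third_color [Fintype V] (hV : Fintype.card V = 4) (c : Sym2 V → C)
    {x y z w u v : V}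
    (hxy : x ≠ y) (hxz : x ≠ z) (hxw : x ≠ w) (hyz : y ≠ z) (hyw : y ≠ w) (hzw : z ≠ w)
    (huv : u ≠ v) (hmatch : c s(x, y) ≠ c s(z, w))
    (hux : c s(u, v) ≠ c s(x, y)) (huz : c s(u, v) ≠ c s(z, w)) :
    ∃ a b d e, IsRainbowPath c a b d e := by
  have hcover := eq_or_eq_or_eq_or_eq_of_card_eq_four hV hxy hxz hxw hyz hyw hzw
  wlog hu : u = x ∨ u = y generalizing x y z w
  · refine this hzw hxz.symm hyz.symm hxw.symm hyw.symm hxy hmatch.symm huz hux ?_ ?_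
    · exact fun t => by have := hcover t; tauto
    · have := hcover u; tauto
  have hv : v = z ∨ v = w := by
    rcases hcover v with rfl | rfl | h | h <;> rcases hu with rfl | rfl <;> simp_all [Sym2.eq_swap]
  exact exists_isRainbowPath_of_cross_edge c hxy hxz hxw hyz hyw hzw hu hv hmatch hux huz

lemma exists_isRainbowPath_of_card_eq_four [Fintype V] (hV : Fintype.card V = 4) (c : Sym2 V → C)
    (hcolors : 4 ≤ Set.ncard {col : C | ∃ u v : V, u ≠ v ∧ c s(u, v) = col}) :
    ∃ x y z w, IsRainbowPath c x y z w := by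
  obtain ⟨x, y, z, w, hxy, hxz, hxw, hyz, hyw, hzw, hmatch⟩ : ∃ x y z w : V,
      x ≠ y ∧ x ≠ z ∧ x ≠ w ∧ y ≠ z ∧ y ≠ w ∧ z ≠ w ∧ c s(x, y) ≠ c s(z, w) := by
    by_contra! hmono
    have := ncard_edgeColors_le_three hV c hmono
    omega
  obtain ⟨_, ⟨u, v, huv, rfl⟩, hnew⟩ : ∃ col ∈ {col : C | ∃ u v : V, u ≠ v ∧ c s(u, v) = col},
      col ∉ ({c s(x, y), c s(z, w)} : Set C) := by
    by_contra! hold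
    have := (Set.ncard_le_ncard hold (Set.toFinite _)).trans (Set.ncard_insert_le _ _)
    rw [Set.ncard_singleton] at this
    omega
  simp only [Set.mem_insert_iff, Set.mem_singleton_iff, not_or] at hnew
  exact exists_isRainbowPath_of_third_color hV c hxy hxz hxw hyz hyw hzw huv hmatch hnew.1 hnew.2

end

/-- In any edge-coloring of `K_4` using at least 4 distinct colors there is a
rainbow `P_4`: a path on all four vertices whose three edges get pairwise
distinct colors. -/
theorem stmt_5 {C : Type*} (c : Sym2 (Fin 4) → C)
    (hcolors : 4 ≤ Set.ncard {col : C | ∃ u v : Fin 4, u ≠ v ∧ c s(u, v) = col}) :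
    ∃ x y z w : Fin 4, x ≠ y ∧ x ≠ z ∧ x ≠ w ∧ y ≠ z ∧ y ≠ w ∧ z ≠ w ∧
      c s(x, y) ≠ c s(y, z) ∧ c s(y, z) ≠ c s(z, w) ∧ c s(x, y) ≠ c s(z, w) :=
  exists_isRainbowPath_of_card_eq_four (Fintype.card_fin 4) c hcolors
end

section
/- In the edge-coloring of K_9 induced by the parallel classes of any Kirkman triple system on 9 points, no set of 4 vertices induces a K_4 whose edges are partitioned into three perfect matchings by the coloring; hence every 4-set contains a rainbow P_4. -/
/-!
Two edges at a vertex `u` have the same colour exactly when they lie in the block of that colour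
through `u`. Hence two adjacent edges of one colour close up to a monochromatic triangle, and no
vertex has three edges of one colour.

If all three perfect matchings of a 4-set `Q` were monochromatic, the six edges of `Q` would miss
one of the four colours, say `i`. The blocks of class `i` through the four points of `Q` are then
pairwise disjoint, so they cover `12` points of a 9-point set. Otherwise some perfect matching
`{ab, de}` of `Q` carries two colours, and one of the paths `b-a-d-e`, `a-b-e-d` is rainbow: each
way of failing forces two monochromatic triangles in `Q` that are incompatible.
-/

structure IsParallelClassColoring {α ι : Type*} (T : Finset (Finset α)) (par : Finset α → ι)
    (c : Sym2 α → ι) : Prop where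
  card_eq_three : ∀ t ∈ T, t.card = 3
  exists_block : ∀ u v : α, u ≠ v → ∃ t ∈ T, u ∈ t ∧ v ∈ t
  existsUnique_block_of_par : ∀ (i : ι) (v : α), ∃! t, t ∈ T ∧ par t = i ∧ v ∈ t
  color_eq_par : ∀ (u v : α) (t : Finset α), u ≠ v → t ∈ T → u ∈ t → v ∈ t → c s(u, v) = par t

namespace IsParallelClassColoring

variable {α ι : Type*} {T : Finset (Finset α)} {par : Finset α → ι} {c : Sym2 α → ι}
  {t : Finset α} {u v w x : α}

theorem mem_of_color_eq (h : IsParallelClassColoring T par c) (ht : t ∈ T) (hu : u ∈ t)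
    (hv : v ∈ t) (huv : u ≠ v) (huw : u ≠ w) (hcol : c s(u, w) = c s(u, v)) : w ∈ t := by
  obtain ⟨t', ht', hu', hw'⟩ := h.exists_block u w huw
  have hpar : par t' = par t := by
    rw [← h.color_eq_par u w t' huw ht' hu' hw', hcol, h.color_eq_par u v t huv ht hu hv]
  have : t' = t := (h.existsUnique_block_of_par (par t) u).unique ⟨ht', hpar, hu'⟩ ⟨ht, rfl, hu⟩
  exact this ▸ hw'

theorem color_eq_of_color_eq (h : IsParallelClassColoring T par c) (huv : u ≠ v) (huw : u ≠ w)
    (hvw : v ≠ w) (hcol : c s(u, w) = c s(u, v)) : c s(v, w) = c s(u, v) := by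
  obtain ⟨t, ht, hu, hv⟩ := h.exists_block u v huv
  rw [h.color_eq_par v w t hvw ht hv (h.mem_of_color_eq ht hu hv huv huw hcol),
    h.color_eq_par u v t huv ht hu hv]

theorem color_ne_of_color_eq [DecidableEq α] (h : IsParallelClassColoring T par c) (huv : u ≠ v)
    (huw : u ≠ w) (hux : u ≠ x) (hvw : v ≠ w) (hvx : v ≠ x) (hwx : w ≠ x)
    (hw : c s(u, w) = c s(u, v)) : c s(u, x) ≠ c s(u, v) := by
  intro hx
  obtain ⟨t, ht, hu, hv⟩ := h.exists_block u v huv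
  have hsub : {u, v, w, x} ⊆ t := by
    simp [Finset.insert_subset_iff, hu, hv, h.mem_of_color_eq ht hu hv huv huw hw,
      h.mem_of_color_eq ht hu hv huv hux hx]
  have := Finset.card_le_card hsub
  rw [h.card_eq_three t ht, Finset.card_insert_of_notMem (by simp [huv, huw, hux]),
    Finset.card_insert_of_notMem (by simp [hvw, hvx]), Finset.card_pair hwx] at this
  omega

theorem three_mul_card_le [Fintype α] [DecidableEq α] (h : IsParallelClassColoring T par c)
    {Q : Finset α} {i : ι} (hQ : ∀ u ∈ Q, ∀ v ∈ Q, u ≠ v → c s(u, v) ≠ i) :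
    3 * Q.card ≤ Fintype.card α := by
  choose B hB using fun v => (h.existsUnique_block_of_par i v).exists
  have hdisj : (Q : Set α).PairwiseDisjoint B := by
    intro u hu v hv huv
    refine Finset.disjoint_left.2 fun y hyu hyv => hQ u hu v hv huv ?_
    have hB_eq : B u = B v := (h.existsUnique_block_of_par i y).unique
      ⟨(hB u).1, (hB u).2.1, hyu⟩ ⟨(hB v).1, (hB v).2.1, hyv⟩
    rw [h.color_eq_par u v (B u) huv (hB u).1 (hB u).2.2 (hB_eq ▸ (hB v).2.2), (hB u).2.1]
  calc 3 * Q.card = (Q.biUnion B).card := by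
        rw [Finset.card_biUnion hdisj, Finset.sum_congr rfl fun v _ => h.card_eq_three _ (hB v).1,
          Finset.sum_const, smul_eq_mul, mul_comm]
    _ ≤ Fintype.card α := Finset.card_le_univ _

theorem not_perfect_matchings_monochromatic [Fintype α] [Fintype ι]
    (h : IsParallelClassColoring T par c) (hα : Fintype.card α < 12) (hι : 3 < Fintype.card ι)
    {a b d e : α} (hab : a ≠ b) (had : a ≠ d) (hae : a ≠ e) (hbd : b ≠ d) (hbe : b ≠ e)
    (hde : d ≠ e) (h₁ : c s(a, b) = c s(d, e)) (h₂ : c s(a, d) = c s(b, e))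
    (h₃ : c s(a, e) = c s(b, d)) : False := by
  classical
  obtain ⟨i, -, hi⟩ : ∃ i ∈ Finset.univ, i ∉ ({c s(a, b), c s(a, d), c s(a, e)} : Finset ι) :=
    Finset.exists_mem_notMem_of_card_lt_card <|
      Finset.card_le_three.trans_lt (by rwa [Finset.card_univ])
  have hQ : ∀ u ∈ ({a, b, d, e} : Finset α), ∀ v ∈ ({a, b, d, e} : Finset α),
      u ≠ v → c s(u, v) ≠ i := by
    simp only [Finset.mem_insert, Finset.mem_singleton, not_or] at hi ⊢
    rintro u (rfl | rfl | rfl | rfl) v (rfl | rfl | rfl | rfl) huv <;>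
      grind [Sym2.eq_swap]
  have := h.three_mul_card_le hQ
  rw [Finset.card_insert_of_notMem (by simp [hab, had, hae]),
    Finset.card_insert_of_notMem (by simp [hbd, hbe]), Finset.card_pair hde] at this
  omega

theorem exists_rainbow_path [DecidableEq α] (h : IsParallelClassColoring T par c) {a b d e : α}
    (hab : a ≠ b) (had : a ≠ d) (hae : a ≠ e) (hbd : b ≠ d) (hbe : b ≠ e) (hde : d ≠ e)
    (hne : c s(a, b) ≠ c s(d, e)) :
    ∃ x y z w : α, x ≠ y ∧ x ≠ z ∧ x ≠ w ∧ y ≠ z ∧ y ≠ w ∧ z ≠ w ∧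
      ({x, y, z, w} : Finset α) = {a, b, d, e} ∧
      c s(x, y) ≠ c s(y, z) ∧ c s(y, z) ≠ c s(z, w) ∧ c s(x, y) ≠ c s(z, w) := by
  by_cases hd : c s(a, d) ≠ c s(a, b) ∧ c s(a, d) ≠ c s(d, e)
  · exact ⟨b, a, d, e, hab.symm, hbd, hbe, had, hae, hde, by ext; simp; tauto,
      by grind [Sym2.eq_swap]⟩
  by_cases he : c s(b, e) ≠ c s(a, b) ∧ c s(b, e) ≠ c s(d, e)
  · exact ⟨a, b, e, d, hab, hae, had, hbe, hbd, hde.symm, by ext; simp; tauto,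
      by grind [Sym2.eq_swap]⟩
  exfalso
  rw [not_and_or, not_ne_iff, not_ne_iff] at hd he
  rcases hd with hd | hd <;> rcases he with he | he
  · have habd := h.color_eq_of_color_eq hab had hbd hd
    exact h.color_ne_of_color_eq hab.symm hbe hbd hae had hde.symm
      (by grind [Sym2.eq_swap]) (by grind [Sym2.eq_swap])
  · have habd := h.color_eq_of_color_eq hab had hbd hd
    have hbde := h.color_eq_of_color_eq hbe.symm hde.symm hbd (by grind [Sym2.eq_swap])
    exact hne (by grind [Sym2.eq_swap])
  · have hade := h.color_eq_of_color_eq had.symm hde hae (by grind [Sym2.eq_swap])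
    have habe := h.color_eq_of_color_eq hab.symm hbe hae (by grind [Sym2.eq_swap])
    exact hne (by grind [Sym2.eq_swap])
  · have hbde := h.color_eq_of_color_eq hbe.symm hde.symm hbd (by grind [Sym2.eq_swap])
    exact h.color_ne_of_color_eq had.symm hde hbd.symm hae hab hbe.symm
      (by grind [Sym2.eq_swap]) (by grind [Sym2.eq_swap])

end IsParallelClassColoring

/-- In the edge-coloring of `K_9` induced by the parallel classes of any Kirkman triple
system on 9 points (4 parallel classes), no 4-set of vertices induces a `K_4` whose
edge set is split by the coloring into three perfect matchings; hence every 4-set of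
vertices contains a rainbow `P_4`. -/
theorem stmt_7 (T : Finset (Finset (Fin 9)))
    (hsize : ∀ t ∈ T, t.card = 3)
    (hpair : ∀ u v : Fin 9, u ≠ v → ∃! t, t ∈ T ∧ u ∈ t ∧ v ∈ t)
    (par : Finset (Fin 9) → Fin 4)
    (hres : ∀ (i : Fin 4) (v : Fin 9), ∃! t, t ∈ T ∧ par t = i ∧ v ∈ t)
    (c : Sym2 (Fin 9) → Fin 4)
    (hc : ∀ (u v : Fin 9) (t : Finset (Fin 9)),
      u ≠ v → t ∈ T → u ∈ t → v ∈ t → c s(u, v) = par t) :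
    ∀ a b d e : Fin 9, a ≠ b → a ≠ d → a ≠ e → b ≠ d → b ≠ e → d ≠ e →
      (¬ (c s(a, b) = c s(d, e) ∧ c s(a, d) = c s(b, e) ∧ c s(a, e) = c s(b, d) ∧
        c s(a, b) ≠ c s(a, d) ∧ c s(a, b) ≠ c s(a, e) ∧ c s(a, d) ≠ c s(a, e))) ∧
      ∃ x y z w : Fin 9, x ≠ y ∧ x ≠ z ∧ x ≠ w ∧ y ≠ z ∧ y ≠ w ∧ z ≠ w ∧
        ({x, y, z, w} : Finset (Fin 9)) = {a, b, d, e} ∧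
        c s(x, y) ≠ c s(y, z) ∧ c s(y, z) ≠ c s(z, w) ∧ c s(x, y) ≠ c s(z, w) := by
  intro a b d e hab had hae hbd hbe hde
  have hT : IsParallelClassColoring T par c :=
    ⟨hsize, fun u v huv => (hpair u v huv).exists, hres, hc⟩
  have hmono : ¬ (c s(a, b) = c s(d, e) ∧ c s(a, d) = c s(b, e) ∧ c s(a, e) = c s(b, d)) :=
    fun ⟨h₁, h₂, h₃⟩ => hT.not_perfect_matchings_monochromatic (by simp) (by simp)
      hab had hae hbd hbe hde h₁ h₂ h₃
  refine ⟨fun h => hmono ⟨h.1, h.2.1, h.2.2.1⟩, ?_⟩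
  by_cases h₁ : c s(a, b) = c s(d, e)
  · by_cases h₂ : c s(a, d) = c s(b, e)
    · have h₃ : c s(a, e) ≠ c s(b, d) := fun h₃ => hmono ⟨h₁, h₂, h₃⟩
      have := hT.exists_rainbow_path hae hab had hbe.symm hde.symm hbd h₃
      rwa [Finset.insert_comm e b, Finset.pair_comm e d] at this
    · have := hT.exists_rainbow_path had hab hae hbd.symm hde hbe h₂
      rwa [Finset.insert_comm d b] at this
  · exact hT.exists_rainbow_path hab had hae hbd hbe hde h₁
end

section
/- Let n = 3^t. Given a Kirkman triple system on 3^{t-1} points whose induced edge-coloring leaves no K_4 colored with only 3 colors ('good KTS'), the following construction yields a good KTS on 3^t points: take three disjoint copies A_0, A_1, A_2 of the point set, use the union of the i-th parallel classes of the three copies as new parallel classes, and for each j in {0,...,3^{t-1}-1} add the parallel class consisting of all triples {(0,a), (1, a+j mod 3^{t-1}), (2, a+2j mod 3^{t-1})}. -/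
/-!
The points are `Fin 3 × Fin N`, a level and an old point. Two points on a common level lie
only in a copy of an old triple; points `(ℓ₁, x)`, `(ℓ₂, y)` on different levels lie only in
the new block of class `j` with `y - x = (ℓ₂ - ℓ₁) j`, and this `j` is unique because
`ℓ₂ - ℓ₁ ∈ {±1, ±2}` is a unit modulo the odd number `N = 3 ^ s`.

For goodness, a 4-set on a single level inherits four old classes. Otherwise it has two points
on a common level, giving one old class, and its cross edges carry three new classes: two
cross edges at a common point whose other ends share a level never share a class, and the
remaining coincidences are excluded by the uniqueness of the block through a cross pair or,
when the 4-set splits 2 + 2 over two levels, by `2` being a unit modulo `N`.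
-/

/-- The triples (with their parallel-class index) of the tripled Kirkman system:
three copies of the old system on the classes `{0,1,2} × Fin N`, whose `i`-th parallel
classes are merged (index `Sum.inl i`), together with, for each `j : Fin N`, the new
parallel class (index `Sum.inr j`) of all triples `{(0,a), (1,a+j), (2,a+2j)}`
(arithmetic mod `N`). -/
def tripledKTS (N : ℕ) [NeZero N] (T : Finset (Finset (Fin N)))
    (par : Finset (Fin N) → Fin ((N - 1) / 2)) :
    Set (Finset (Fin 3 × Fin N) × (Fin ((N - 1) / 2) ⊕ Fin N)) :=
  {e | (∃ (ℓ : Fin 3) (t : Finset (Fin N)), t ∈ T ∧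
          e = (t.image (fun x => (ℓ, x)), Sum.inl (par t))) ∨
       (∃ j a : Fin N,
          e = ({(0, a), (1, a + j), (2, a + j + j)}, Sum.inr j))}

/-- A parallel class index `i` appears on an edge inside a 4-set `{a,b,d,e}` of a
system of triples-with-class-indices `S`. -/
def classOnQuad {P C : Type*} (S : Set (Finset P × C)) (a b d e : P) (i : C) : Prop :=
  ∃ u v : P, u ∈ ({a, b, d, e} : Set P) ∧ v ∈ ({a, b, d, e} : Set P) ∧ u ≠ v ∧
    ∃ s, (s, i) ∈ S ∧ u ∈ s ∧ v ∈ s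

open Fin.NatCast Fin.CommRing

theorem Finset.mem_image_prodMk_left {α β : Type*} [DecidableEq (α × β)] {a : α}
    {t : Finset β} {p : α × β} : p ∈ t.image (fun x => (a, x)) ↔ p.1 = a ∧ p.2 ∈ t := by
  obtain ⟨a', x⟩ := p
  simp only [Finset.mem_image, Prod.mk.injEq]
  constructor
  · rintro ⟨x, hx, rfl, rfl⟩
    exact ⟨rfl, hx⟩
  · rintro ⟨rfl, hx⟩
    exact ⟨x, hx, rfl, rfl⟩

theorem Fin.isUnit_two_of_odd {N : ℕ} [NeZero N] (hN : Odd N) : IsUnit (2 : Fin N) := by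
  obtain ⟨k, rfl⟩ := hN
  refine IsUnit.of_mul_eq_one ((k + 1 : ℕ) : Fin (2 * k + 1)) ?_
  have h : ((2 * k + 1 : ℕ) : Fin (2 * k + 1)) = 0 := Fin.natCast_self _
  push_cast at h ⊢
  linear_combination h

section Classes

variable {P C : Type*}

-- `classOnQuad S a b d e` is `classOn S {a, b, d, e}`; indexing by the set makes relabelling
-- the four points free.
def classOn (S : Set (Finset P × C)) (Q : Set P) (i : C) : Prop :=
  ∃ u v : P, u ∈ Q ∧ v ∈ Q ∧ u ≠ v ∧ ∃ s, (s, i) ∈ S ∧ u ∈ s ∧ v ∈ s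

def HasFourClassesOn (S : Set (Finset P × C)) (Q : Set P) : Prop :=
  ∃ i₁ i₂ i₃ i₄ : C, i₁ ≠ i₂ ∧ i₁ ≠ i₃ ∧ i₁ ≠ i₄ ∧ i₂ ≠ i₃ ∧ i₂ ≠ i₄ ∧ i₃ ≠ i₄ ∧
    classOn S Q i₁ ∧ classOn S Q i₂ ∧ classOn S Q i₃ ∧ classOn S Q i₄

theorem HasFourClassesOn.map {P' C' : Type*} {S : Set (Finset P × C)}
    {S' : Set (Finset P' × C')} {Q : Set P} {Q' : Set P'} {f : C → C'}
    (hf : Function.Injective f) (hS : ∀ i, classOn S Q i → classOn S' Q' (f i))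
    (h : HasFourClassesOn S Q) : HasFourClassesOn S' Q' := by
  obtain ⟨i₁, i₂, i₃, i₄, h₁₂, h₁₃, h₁₄, h₂₃, h₂₄, h₃₄, c₁, c₂, c₃, c₄⟩ := h
  exact ⟨f i₁, f i₂, f i₃, f i₄, hf.ne h₁₂, hf.ne h₁₃, hf.ne h₁₄, hf.ne h₂₃, hf.ne h₂₄,
    hf.ne h₃₄, hS _ c₁, hS _ c₂, hS _ c₃, hS _ c₄⟩

end Classes

section NewBlocks

variable {N : ℕ}

variable (N) in
def newBlock (j a : Fin N) : Finset (Fin 3 × Fin N) :=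
  {(0, a), (1, a + j), (2, a + j + j)}

def SameNewBlock (j : Fin N) (p q : Fin 3 × Fin N) : Prop :=
  ∃ a, p ∈ newBlock N j a ∧ q ∈ newBlock N j a

theorem SameNewBlock.symm {j : Fin N} {p q : Fin 3 × Fin N} (h : SameNewBlock j p q) :
    SameNewBlock j q p :=
  let ⟨a, hp, hq⟩ := h
  ⟨a, hq, hp⟩

variable [NeZero N]

variable (N) in
def levelShift (ℓ : Fin 3) : Fin N := ℓ.val

theorem isUnit_levelShift_sub (hN : Odd N) {ℓ₁ ℓ₂ : Fin 3} (h : ℓ₁ ≠ ℓ₂) :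
    IsUnit (levelShift N ℓ₂ - levelShift N ℓ₁) := by
  have h2 := Fin.isUnit_two_of_odd hN
  fin_cases ℓ₁ <;> fin_cases ℓ₂ <;> first | exact absurd rfl h | norm_num [levelShift, h2]

theorem mem_newBlock {j a : Fin N} {p : Fin 3 × Fin N} :
    p ∈ newBlock N j a ↔ p.2 = a + levelShift N p.1 * j := by
  obtain ⟨ℓ, x⟩ := p
  fin_cases ℓ <;> simp [newBlock, levelShift, two_mul, add_assoc]

variable {j : Fin N} {p q r : Fin 3 × Fin N}

theorem eq_of_mem_newBlock {a b : Fin N} (ha : p ∈ newBlock N j a) (hb : p ∈ newBlock N j b) :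
    a = b := by
  rw [mem_newBlock] at ha hb
  linear_combination hb - ha

theorem sameNewBlock_iff :
    SameNewBlock j p q ↔ q.2 - p.2 = (levelShift N q.1 - levelShift N p.1) * j := by
  simp only [SameNewBlock, mem_newBlock]
  constructor
  · rintro ⟨a, hp, hq⟩
    rw [hp, hq]
    ring
  · intro h
    exact ⟨p.2 - levelShift N p.1 * j, by ring, by linear_combination h⟩

theorem SameNewBlock.trans (hpq : SameNewBlock j p q) (hqr : SameNewBlock j q r) :
    SameNewBlock j p r := by
  rw [sameNewBlock_iff] at *
  linear_combination hpq + hqr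

theorem SameNewBlock.eq_of_fst_eq (hq : SameNewBlock j p q) (hr : SameNewBlock j p r)
    (h : q.1 = r.1) : q = r := by
  rw [sameNewBlock_iff] at hq hr
  rw [h] at hq
  exact Prod.ext h (by linear_combination hq - hr)

theorem existsUnique_sameNewBlock (hN : Odd N) (h : p.1 ≠ q.1) :
    ∃! j, SameNewBlock j p q := by
  obtain ⟨u, hu⟩ := isUnit_levelShift_sub hN h
  simp only [sameNewBlock_iff, ← hu]
  exact ⟨↑u⁻¹ * (q.2 - p.2), by simp, fun k hk => by simp [hk]⟩

def NewClassOn (Q : Set (Fin 3 × Fin N)) (j : Fin N) : Prop :=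
  ∃ p ∈ Q, ∃ q ∈ Q, p.1 ≠ q.1 ∧ SameNewBlock j p q

def HasThreeNewClassesOn (Q : Set (Fin 3 × Fin N)) : Prop :=
  ∃ j₁ j₂ j₃ : Fin N, j₁ ≠ j₂ ∧ j₁ ≠ j₃ ∧ j₂ ≠ j₃ ∧
    NewClassOn Q j₁ ∧ NewClassOn Q j₂ ∧ NewClassOn Q j₃

variable (hN : Odd N) {Q : Set (Fin 3 × Fin N)}
include hN

theorem hasThreeNewClassesOn_of_three_one {x₁ x₂ x₃ y : Fin 3 × Fin N}
    (m₁ : x₁ ∈ Q) (m₂ : x₂ ∈ Q) (m₃ : x₃ ∈ Q) (my : y ∈ Q)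
    (h₁₂ : x₁ ≠ x₂) (h₁₃ : x₁ ≠ x₃) (h₂₃ : x₂ ≠ x₃)
    (hx₂ : x₁.1 = x₂.1) (hx₃ : x₁.1 = x₃.1) (hy : y.1 ≠ x₁.1) :
    HasThreeNewClassesOn Q := by
  have hy₂ : y.1 ≠ x₂.1 := hx₂ ▸ hy
  have hy₃ : y.1 ≠ x₃.1 := hx₃ ▸ hy
  obtain ⟨j₁, c₁, -⟩ := existsUnique_sameNewBlock hN hy
  obtain ⟨j₂, c₂, -⟩ := existsUnique_sameNewBlock hN hy₂
  obtain ⟨j₃, c₃, -⟩ := existsUnique_sameNewBlock hN hy₃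
  refine ⟨j₁, j₂, j₃, ?_, ?_, ?_, ⟨y, my, x₁, m₁, hy, c₁⟩, ⟨y, my, x₂, m₂, hy₂, c₂⟩,
    ⟨y, my, x₃, m₃, hy₃, c₃⟩⟩
  · rintro rfl
    exact h₁₂ (c₁.eq_of_fst_eq c₂ hx₂)
  · rintro rfl
    exact h₁₃ (c₁.eq_of_fst_eq c₃ hx₃)
  · rintro rfl
    exact h₂₃ (c₂.eq_of_fst_eq c₃ (hx₂.symm.trans hx₃))

theorem hasThreeNewClassesOn_of_two_two {x₁ x₂ y₁ y₂ : Fin 3 × Fin N}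
    (m₁ : x₁ ∈ Q) (m₂ : x₂ ∈ Q) (n₁ : y₁ ∈ Q) (n₂ : y₂ ∈ Q)
    (hx : x₁ ≠ x₂) (hy : y₁ ≠ y₂) (hxl : x₁.1 = x₂.1) (hyl : y₁.1 = y₂.1)
    (hl : x₁.1 ≠ y₁.1) : HasThreeNewClassesOn Q := by
  have hl₁₂ : x₁.1 ≠ y₂.1 := hyl ▸ hl
  have hl₂₁ : x₂.1 ≠ y₁.1 := hxl ▸ hl
  have hl₂₂ : x₂.1 ≠ y₂.1 := hxl ▸ hl₁₂
  obtain ⟨j₁₁, c₁₁, -⟩ := existsUnique_sameNewBlock hN hl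
  obtain ⟨j₁₂, c₁₂, -⟩ := existsUnique_sameNewBlock hN hl₁₂
  obtain ⟨j₂₁, c₂₁, -⟩ := existsUnique_sameNewBlock hN hl₂₁
  obtain ⟨j₂₂, c₂₂, -⟩ := existsUnique_sameNewBlock hN hl₂₂
  have d₁ : j₁₁ ≠ j₁₂ := by
    rintro rfl
    exact hy (c₁₁.eq_of_fst_eq c₁₂ hyl)
  have d₂ : j₁₁ ≠ j₂₁ := by
    rintro rfl
    exact hx (c₁₁.symm.eq_of_fst_eq c₂₁.symm hxl)
  have d₃ : j₁₂ ≠ j₂₂ := by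
    rintro rfl
    exact hx (c₁₂.symm.eq_of_fst_eq c₂₂.symm hxl)
  have o₁₁ := (⟨x₁, m₁, y₁, n₁, hl, c₁₁⟩ : NewClassOn Q j₁₁)
  have o₁₂ := (⟨x₁, m₁, y₂, n₂, hl₁₂, c₁₂⟩ : NewClassOn Q j₁₂)
  -- If `x₁ y₁, x₂ y₂` share a class and so do `x₁ y₂, x₂ y₁`, then `2 (y₁ - y₂) = 0`.
  by_cases hj : j₁₁ = j₂₂
  · refine ⟨j₁₁, j₁₂, j₂₁, d₁, d₂, ?_, o₁₁, o₁₂, ⟨x₂, m₂, y₁, n₁, hl₂₁, c₂₁⟩⟩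
    rintro rfl
    subst hj
    rw [sameNewBlock_iff] at c₁₁ c₁₂ c₂₁ c₂₂
    simp only [← hxl, ← hyl] at c₁₂ c₂₁ c₂₂
    refine hy (Prod.ext hyl ((Fin.isUnit_two_of_odd hN).mul_left_cancel ?_))
    linear_combination c₁₁ + c₂₁ - c₁₂ - c₂₂
  · exact ⟨j₁₁, j₁₂, j₂₂, d₁, hj, d₃, o₁₁, o₁₂, ⟨x₂, m₂, y₂, n₂, hl₂₂, c₂₂⟩⟩

theorem hasThreeNewClassesOn_of_two_one_one {x₁ x₂ y z : Fin 3 × Fin N}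
    (m₁ : x₁ ∈ Q) (m₂ : x₂ ∈ Q) (my : y ∈ Q) (mz : z ∈ Q) (hx : x₁ ≠ x₂)
    (hxl : x₁.1 = x₂.1) (hxy : x₁.1 ≠ y.1) (hxz : x₁.1 ≠ z.1) (hyz : y.1 ≠ z.1) :
    HasThreeNewClassesOn Q := by
  have hx₂y : x₂.1 ≠ y.1 := hxl ▸ hxy
  have hx₂z : x₂.1 ≠ z.1 := hxl ▸ hxz
  obtain ⟨f₁, cf₁, -⟩ := existsUnique_sameNewBlock hN hxy
  obtain ⟨f₂, cf₂, -⟩ := existsUnique_sameNewBlock hN hx₂y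
  obtain ⟨g₁, cg₁, ug₁⟩ := existsUnique_sameNewBlock hN hxz
  obtain ⟨g₂, cg₂, ug₂⟩ := existsUnique_sameNewBlock hN hx₂z
  obtain ⟨k, ck, uk⟩ := existsUnique_sameNewBlock hN hyz
  have df : f₁ ≠ f₂ := by
    rintro rfl
    exact hx (cf₁.symm.eq_of_fst_eq cf₂.symm hxl)
  have dg : g₁ ≠ g₂ := by
    rintro rfl
    exact hx (cg₁.symm.eq_of_fst_eq cg₂.symm hxl)
  have o₁ := (⟨x₁, m₁, y, my, hxy, cf₁⟩ : NewClassOn Q f₁)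
  have o₂ := (⟨x₂, m₂, y, my, hx₂y, cf₂⟩ : NewClassOn Q f₂)
  -- If `y z` lies in the new block of `x₁ y` (resp. `x₂ y`), then `x₂ z` (resp. `x₁ z`)
  -- carries a third class; otherwise `y z` does.
  by_cases e₁ : k = f₁
  · subst e₁
    have hg₁ : k = g₁ := ug₁ k (cf₁.trans ck)
    refine ⟨k, f₂, g₂, df, fun h => dg (hg₁.symm.trans h), ?_, o₁, o₂, ⟨x₂, m₂, z, mz, hx₂z, cg₂⟩⟩
    rintro rfl
    exact df (uk f₂ (cf₂.symm.trans cg₂)).symm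
  by_cases e₂ : k = f₂
  · subst e₂
    have hg₂ : k = g₂ := ug₂ k (cf₂.trans ck)
    refine ⟨f₁, k, g₁, df, ?_, fun h => dg (h.symm.trans hg₂), o₁, o₂,
      ⟨x₁, m₁, z, mz, hxz, cg₁⟩⟩
    rintro rfl
    exact df (uk f₁ (cf₁.symm.trans cg₁))
  exact ⟨f₁, f₂, k, df, Ne.symm e₁, Ne.symm e₂, o₁, o₂, ⟨y, my, z, mz, hyz, ck⟩⟩

end NewBlocks

section Tripled

variable {N : ℕ} [NeZero N] {T : Finset (Finset (Fin N))}
  {par : Finset (Fin N) → Fin ((N - 1) / 2)}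

theorem mk_inl_mem_tripledKTS {s : Finset (Fin 3 × Fin N)} {i : Fin ((N - 1) / 2)} :
    (s, Sum.inl i) ∈ tripledKTS N T par ↔
      ∃ ℓ, ∃ t ∈ T, par t = i ∧ s = t.image (fun x => (ℓ, x)) := by
  simp [tripledKTS, and_comm, eq_comm]

theorem mk_inr_mem_tripledKTS {s : Finset (Fin 3 × Fin N)} {j : Fin N} :
    (s, Sum.inr j) ∈ tripledKTS N T par ↔ ∃ a, s = newBlock N j a := by
  simp [tripledKTS, newBlock]

theorem existsUnique_mem_tripledKTS_of_fst_eq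
    (hpair : ∀ u v : Fin N, u ≠ v → ∃! t, t ∈ T ∧ u ∈ t ∧ v ∈ t)
    {u v : Fin 3 × Fin N} (huv : u ≠ v) (h : u.1 = v.1) :
    ∃! e : Finset (Fin 3 × Fin N) × (Fin ((N - 1) / 2) ⊕ Fin N),
      e ∈ tripledKTS N T par ∧ u ∈ e.1 ∧ v ∈ e.1 := by
  obtain ⟨t, ⟨ht, hut, hvt⟩, ht_unique⟩ := hpair u.2 v.2 fun h' => huv (Prod.ext h h')
  refine ⟨(t.image (fun x => (u.1, x)), Sum.inl (par t)),
    ⟨mk_inl_mem_tripledKTS.2 ⟨u.1, t, ht, rfl, rfl⟩,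
      Finset.mem_image_prodMk_left.2 ⟨rfl, hut⟩, Finset.mem_image_prodMk_left.2 ⟨h.symm, hvt⟩⟩,
    ?_⟩
  rintro ⟨s, i | j⟩ ⟨hs, hus, hvs⟩
  · obtain ⟨ℓ, t', ht', rfl, rfl⟩ := mk_inl_mem_tripledKTS.1 hs
    rw [Finset.mem_image_prodMk_left] at hus hvs
    rw [hus.1, ht_unique t' ⟨ht', hus.2, hvs.2⟩]
  · obtain ⟨a, rfl⟩ := mk_inr_mem_tripledKTS.1 hs
    exact absurd (SameNewBlock.eq_of_fst_eq ⟨a, hus, hus⟩ ⟨a, hus, hvs⟩ h) huv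

theorem existsUnique_mem_tripledKTS_of_fst_ne (hN : Odd N) {u v : Fin 3 × Fin N}
    (h : u.1 ≠ v.1) :
    ∃! e : Finset (Fin 3 × Fin N) × (Fin ((N - 1) / 2) ⊕ Fin N),
      e ∈ tripledKTS N T par ∧ u ∈ e.1 ∧ v ∈ e.1 := by
  obtain ⟨j, ⟨a, hua, hva⟩, hj_unique⟩ := existsUnique_sameNewBlock hN h
  refine ⟨(newBlock N j a, Sum.inr j), ⟨mk_inr_mem_tripledKTS.2 ⟨a, rfl⟩, hua, hva⟩, ?_⟩
  rintro ⟨s, i | k⟩ ⟨hs, hus, hvs⟩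
  · obtain ⟨ℓ, t, -, -, rfl⟩ := mk_inl_mem_tripledKTS.1 hs
    rw [Finset.mem_image_prodMk_left] at hus hvs
    exact absurd (hus.1.trans hvs.1.symm) h
  · obtain ⟨b, rfl⟩ := mk_inr_mem_tripledKTS.1 hs
    obtain rfl := hj_unique k ⟨b, hus, hvs⟩
    rw [eq_of_mem_newBlock hus hua]

theorem existsUnique_inl_mem_tripledKTS
    (hres : ∀ (i : Fin ((N - 1) / 2)) (v : Fin N), ∃! t, t ∈ T ∧ par t = i ∧ v ∈ t)
    (i : Fin ((N - 1) / 2)) (v : Fin 3 × Fin N) :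
    ∃! s : Finset (Fin 3 × Fin N), (s, Sum.inl i) ∈ tripledKTS N T par ∧ v ∈ s := by
  obtain ⟨t, ⟨ht, hti, hvt⟩, ht_unique⟩ := hres i v.2
  refine ⟨t.image (fun x => (v.1, x)), ⟨mk_inl_mem_tripledKTS.2 ⟨v.1, t, ht, hti, rfl⟩,
    Finset.mem_image_prodMk_left.2 ⟨rfl, hvt⟩⟩, ?_⟩
  rintro s ⟨hs, hvs⟩
  obtain ⟨ℓ, t', ht', rfl, rfl⟩ := mk_inl_mem_tripledKTS.1 hs
  obtain ⟨hℓ, hvt'⟩ := Finset.mem_image_prodMk_left.1 hvs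
  rw [hℓ, ht_unique t' ⟨ht', rfl, hvt'⟩]

theorem existsUnique_inr_mem_tripledKTS (j : Fin N) (v : Fin 3 × Fin N) :
    ∃! s : Finset (Fin 3 × Fin N), (s, Sum.inr j) ∈ tripledKTS N T par ∧ v ∈ s := by
  have hv : v ∈ newBlock N j (v.2 - levelShift N v.1 * j) := mem_newBlock.2 (by ring)
  refine ⟨_, ⟨mk_inr_mem_tripledKTS.2 ⟨_, rfl⟩, hv⟩, ?_⟩
  rintro s ⟨hs, hvs⟩
  obtain ⟨a, rfl⟩ := mk_inr_mem_tripledKTS.1 hs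
  rw [eq_of_mem_newBlock hvs hv]

theorem classOn_tripledKTS_inl {Q₀ : Set (Fin N)} {Q : Set (Fin 3 × Fin N)} {ℓ : Fin 3}
    (hQ : ∀ x ∈ Q₀, (ℓ, x) ∈ Q) {i : Fin ((N - 1) / 2)}
    (h : classOn {e | ∃ t ∈ T, e = (t, par t)} Q₀ i) :
    classOn (tripledKTS N T par) Q (Sum.inl i) := by
  obtain ⟨u, v, hu, hv, huv, s, ⟨t, ht, hst⟩, hus, hvs⟩ := h
  obtain ⟨rfl, rfl⟩ := Prod.mk.inj hst
  exact ⟨(ℓ, u), (ℓ, v), hQ u hu, hQ v hv, fun h => huv (congrArg Prod.snd h),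
    _, mk_inl_mem_tripledKTS.2 ⟨ℓ, s, ht, rfl, rfl⟩,
    Finset.mem_image_prodMk_left.2 ⟨rfl, hus⟩, Finset.mem_image_prodMk_left.2 ⟨rfl, hvs⟩⟩

theorem exists_classOn_tripledKTS_inl
    (hpair : ∀ u v : Fin N, u ≠ v → ∃! t, t ∈ T ∧ u ∈ t ∧ v ∈ t)
    {Q : Set (Fin 3 × Fin N)} {p q : Fin 3 × Fin N} (hp : p ∈ Q) (hq : q ∈ Q) (hpq : p ≠ q)
    (h : p.1 = q.1) : ∃ i, classOn (tripledKTS N T par) Q (Sum.inl i) := by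
  obtain ⟨t, ⟨ht, hpt, hqt⟩, -⟩ := hpair p.2 q.2 fun h' => hpq (Prod.ext h h')
  exact ⟨par t, p, q, hp, hq, hpq, _, mk_inl_mem_tripledKTS.2 ⟨p.1, t, ht, rfl, rfl⟩,
    Finset.mem_image_prodMk_left.2 ⟨rfl, hpt⟩, Finset.mem_image_prodMk_left.2 ⟨h.symm, hqt⟩⟩

theorem NewClassOn.classOn_tripledKTS {Q : Set (Fin 3 × Fin N)} {j : Fin N}
    (h : NewClassOn Q j) : classOn (tripledKTS N T par) Q (Sum.inr j) := by
  obtain ⟨p, hp, q, hq, hpq, a, hpa, hqa⟩ := h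
  exact ⟨p, q, hp, hq, fun h => hpq (congrArg Prod.fst h), _,
    mk_inr_mem_tripledKTS.2 ⟨a, rfl⟩, hpa, hqa⟩

theorem HasThreeNewClassesOn.hasFourClassesOn_tripledKTS {Q : Set (Fin 3 × Fin N)}
    {i : Fin ((N - 1) / 2)} (h : HasThreeNewClassesOn Q)
    (hi : classOn (tripledKTS N T par) Q (Sum.inl i)) :
    HasFourClassesOn (tripledKTS N T par) Q := by
  obtain ⟨j₁, j₂, j₃, h₁₂, h₁₃, h₂₃, c₁, c₂, c₃⟩ := h
  exact ⟨Sum.inl i, Sum.inr j₁, Sum.inr j₂, Sum.inr j₃, Sum.inl_ne_inr, Sum.inl_ne_inr,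
    Sum.inl_ne_inr, Sum.inr_injective.ne h₁₂, Sum.inr_injective.ne h₁₃,
    Sum.inr_injective.ne h₂₃, hi, c₁.classOn_tripledKTS, c₂.classOn_tripledKTS,
    c₃.classOn_tripledKTS⟩

variable (hN : Odd N) (hpair : ∀ u v : Fin N, u ≠ v → ∃! t, t ∈ T ∧ u ∈ t ∧ v ∈ t)
  (hgood : ∀ a b d e : Fin N, a ≠ b → a ≠ d → a ≠ e → b ≠ d → b ≠ e → d ≠ e →
    HasFourClassesOn {e | ∃ t ∈ T, e = (t, par t)} {a, b, d, e})
include hN hpair hgood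

theorem hasFourClassesOn_tripledKTS_of_fst_eq {Q : Set (Fin 3 × Fin N)}
    (x₁ x₂ p q : Fin 3 × Fin N) (m₁ : x₁ ∈ Q) (m₂ : x₂ ∈ Q) (mp : p ∈ Q) (mq : q ∈ Q)
    (h₁₂ : x₁ ≠ x₂) (h₁p : x₁ ≠ p) (h₁q : x₁ ≠ q) (h₂p : x₂ ≠ p) (h₂q : x₂ ≠ q)
    (hpq : p ≠ q) (hx : x₁.1 = x₂.1) : HasFourClassesOn (tripledKTS N T par) Q := by
  obtain ⟨i, hi⟩ := exists_classOn_tripledKTS_inl hpair m₁ m₂ h₁₂ hx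
  by_cases hp : x₁.1 = p.1 <;> by_cases hq : x₁.1 = q.1
  · have hQ : ∀ x ∈ ({x₁.2, x₂.2, p.2, q.2} : Set (Fin N)), (x₁.1, x) ∈ Q := by
      rintro x (rfl | rfl | rfl | rfl)
      exacts [m₁, hx ▸ m₂, hp ▸ mp, hq ▸ mq]
    have hsnd {u v : Fin 3 × Fin N} (huv : u ≠ v) (h : u.1 = v.1) : u.2 ≠ v.2 :=
      fun h' => huv (Prod.ext h h')
    refine (hgood _ _ _ _ (hsnd h₁₂ hx) (hsnd h₁p hp) (hsnd h₁q hq) (hsnd h₂p (hx ▸ hp))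
      (hsnd h₂q (hx ▸ hq)) (hsnd hpq (hp ▸ hq))).map Sum.inl_injective ?_
    exact fun i => classOn_tripledKTS_inl hQ
  · exact (hasThreeNewClassesOn_of_three_one hN m₁ m₂ mp mq h₁₂ h₁p h₂p hx hp
      (Ne.symm hq)).hasFourClassesOn_tripledKTS hi
  · exact (hasThreeNewClassesOn_of_three_one hN m₁ m₂ mq mp h₁₂ h₁q h₂q hx hq
      (Ne.symm hp)).hasFourClassesOn_tripledKTS hi
  · by_cases hl : p.1 = q.1
    · exact (hasThreeNewClassesOn_of_two_two hN m₁ m₂ mp mq h₁₂ hpq hx hl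
        hp).hasFourClassesOn_tripledKTS hi
    · exact (hasThreeNewClassesOn_of_two_one_one hN m₁ m₂ mp mq h₁₂ hx hp hq
        hl).hasFourClassesOn_tripledKTS hi

theorem hasFourClassesOn_tripledKTS {a b d e : Fin 3 × Fin N} (hab : a ≠ b) (had : a ≠ d)
    (hae : a ≠ e) (hbd : b ≠ d) (hbe : b ≠ e) (hde : d ≠ e) :
    HasFourClassesOn (tripledKTS N T par) {a, b, d, e} := by
  have key := hasFourClassesOn_tripledKTS_of_fst_eq hN hpair hgood (Q := {a, b, d, e})
  have pigeonhole : a.1 = b.1 ∨ a.1 = d.1 ∨ a.1 = e.1 ∨ b.1 = d.1 ∨ b.1 = e.1 ∨ d.1 = e.1 := by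
    have := a.1.isLt; have := b.1.isLt; have := d.1.isLt; have := e.1.isLt
    simp only [Fin.ext_iff]
    omega
  rcases pigeonhole with h | h | h | h | h | h
  · exact key a b d e (by simp) (by simp) (by simp) (by simp) hab had hae hbd hbe hde h
  · exact key a d b e (by simp) (by simp) (by simp) (by simp) had hab hae hbd.symm hde hbe h
  · exact key a e b d (by simp) (by simp) (by simp) (by simp) hae hab had hbe.symm hde.symm
      hbd h
  · exact key b d a e (by simp) (by simp) (by simp) (by simp) hbd hab.symm hbe had.symm hde
      hae h
  · exact key b e a d (by simp) (by simp) (by simp) (by simp) hbe hab.symm hbd hae.symm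
      hde.symm had h
  · exact key d e a b (by simp) (by simp) (by simp) (by simp) hde had.symm hbd.symm hae.symm
      hbe.symm hab h

end Tripled

theorem stmt_8_general (N : ℕ) [NeZero N] (hpow : ∃ s : ℕ, N = 3 ^ s)
    (T : Finset (Finset (Fin N)))
    (hpair : ∀ u v : Fin N, u ≠ v → ∃! t, t ∈ T ∧ u ∈ t ∧ v ∈ t)
    (par : Finset (Fin N) → Fin ((N - 1) / 2))
    (hres : ∀ (i : Fin ((N - 1) / 2)) (v : Fin N), ∃! t, t ∈ T ∧ par t = i ∧ v ∈ t)
    (hgood : ∀ a b d e : Fin N, a ≠ b → a ≠ d → a ≠ e → b ≠ d → b ≠ e → d ≠ e →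
      ∃ i1 i2 i3 i4 : Fin ((N - 1) / 2), i1 ≠ i2 ∧ i1 ≠ i3 ∧ i1 ≠ i4 ∧ i2 ≠ i3 ∧
        i2 ≠ i4 ∧ i3 ≠ i4 ∧
        classOnQuad {e | ∃ t ∈ T, e = (t, par t)} a b d e i1 ∧
        classOnQuad {e | ∃ t ∈ T, e = (t, par t)} a b d e i2 ∧
        classOnQuad {e | ∃ t ∈ T, e = (t, par t)} a b d e i3 ∧
        classOnQuad {e | ∃ t ∈ T, e = (t, par t)} a b d e i4) :
    (∀ u v : Fin 3 × Fin N, u ≠ v →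
      ∃! e : Finset (Fin 3 × Fin N) × (Fin ((N - 1) / 2) ⊕ Fin N),
        e ∈ tripledKTS N T par ∧ u ∈ e.1 ∧ v ∈ e.1) ∧
    (∀ (i : Fin ((N - 1) / 2) ⊕ Fin N) (v : Fin 3 × Fin N),
      ∃! s : Finset (Fin 3 × Fin N), (s, i) ∈ tripledKTS N T par ∧ v ∈ s) ∧
    (∀ a b d e : Fin 3 × Fin N, a ≠ b → a ≠ d → a ≠ e → b ≠ d → b ≠ e → d ≠ e →
      ∃ i1 i2 i3 i4 : Fin ((N - 1) / 2) ⊕ Fin N, i1 ≠ i2 ∧ i1 ≠ i3 ∧ i1 ≠ i4 ∧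
        i2 ≠ i3 ∧ i2 ≠ i4 ∧ i3 ≠ i4 ∧
        classOnQuad (tripledKTS N T par) a b d e i1 ∧
        classOnQuad (tripledKTS N T par) a b d e i2 ∧
        classOnQuad (tripledKTS N T par) a b d e i3 ∧
        classOnQuad (tripledKTS N T par) a b d e i4) := by
  have hN : Odd N := by
    obtain ⟨s, rfl⟩ := hpow
    exact Odd.pow (by decide)
  refine ⟨fun u v huv => ?_, ?_, fun a b d e => hasFourClassesOn_tripledKTS hN hpair hgood⟩
  · by_cases h : u.1 = v.1
    exacts [existsUnique_mem_tripledKTS_of_fst_eq hpair huv h,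
      existsUnique_mem_tripledKTS_of_fst_ne hN h]
  · rintro (i | j) v
    exacts [existsUnique_inl_mem_tripledKTS hres i v, existsUnique_inr_mem_tripledKTS j v]

/-- Let `N = 3^{t-1}` (a power of 3). Given a good Kirkman triple system on `N` points
(a Steiner triple system `T` resolved into `(N-1)/2` parallel classes by `par`, such
that every 4-set of points meets at least 4 parallel classes on its edges), the tripled
construction `tripledKTS` is again a Kirkman triple system on `3N` points — every pair
of distinct points lies in exactly one triple, and each parallel class covers each
point exactly once — and it is again good: every 4-set of new points meets at least
4 parallel classes on its edges. -/
theorem stmt_8 (N : ℕ) [NeZero N] (hpow : ∃ s : ℕ, N = 3 ^ s)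
    (T : Finset (Finset (Fin N)))
    (hsize : ∀ t ∈ T, t.card = 3)
    (hpair : ∀ u v : Fin N, u ≠ v → ∃! t, t ∈ T ∧ u ∈ t ∧ v ∈ t)
    (par : Finset (Fin N) → Fin ((N - 1) / 2))
    (hres : ∀ (i : Fin ((N - 1) / 2)) (v : Fin N), ∃! t, t ∈ T ∧ par t = i ∧ v ∈ t)
    (hgood : ∀ a b d e : Fin N, a ≠ b → a ≠ d → a ≠ e → b ≠ d → b ≠ e → d ≠ e →
      ∃ i1 i2 i3 i4 : Fin ((N - 1) / 2), i1 ≠ i2 ∧ i1 ≠ i3 ∧ i1 ≠ i4 ∧ i2 ≠ i3 ∧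
        i2 ≠ i4 ∧ i3 ≠ i4 ∧
        classOnQuad {e | ∃ t ∈ T, e = (t, par t)} a b d e i1 ∧
        classOnQuad {e | ∃ t ∈ T, e = (t, par t)} a b d e i2 ∧
        classOnQuad {e | ∃ t ∈ T, e = (t, par t)} a b d e i3 ∧
        classOnQuad {e | ∃ t ∈ T, e = (t, par t)} a b d e i4) :
    (∀ u v : Fin 3 × Fin N, u ≠ v →
      ∃! e : Finset (Fin 3 × Fin N) × (Fin ((N - 1) / 2) ⊕ Fin N),
        e ∈ tripledKTS N T par ∧ u ∈ e.1 ∧ v ∈ e.1) ∧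
    (∀ (i : Fin ((N - 1) / 2) ⊕ Fin N) (v : Fin 3 × Fin N),
      ∃! s : Finset (Fin 3 × Fin N), (s, i) ∈ tripledKTS N T par ∧ v ∈ s) ∧
    (∀ a b d e : Fin 3 × Fin N, a ≠ b → a ≠ d → a ≠ e → b ≠ d → b ≠ e → d ≠ e →
      ∃ i1 i2 i3 i4 : Fin ((N - 1) / 2) ⊕ Fin N, i1 ≠ i2 ∧ i1 ≠ i3 ∧ i1 ≠ i4 ∧
        i2 ≠ i3 ∧ i2 ≠ i4 ∧ i3 ≠ i4 ∧
        classOnQuad (tripledKTS N T par) a b d e i1 ∧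
        classOnQuad (tripledKTS N T par) a b d e i2 ∧
        classOnQuad (tripledKTS N T par) a b d e i3 ∧
        classOnQuad (tripledKTS N T par) a b d e i4) :=
  stmt_8_general N hpow T hpair par hres hgood
end

section
/- For every n ≥ 4 there exist ⌈log₂ n⌉ edge-colorings of K_n, each using 4 colors, such that for every set of 4 vertices, at least one of the colorings makes some P_4 on those 4 vertices rainbow (its three edges get three distinct colors). -/
/-!
Order the bits of a label from the least significant one. For four distinct labels, take two of
them, `y` and `z`, that share the longest block of low bits, and let `i` be the first bit where
they differ; then no two of the four labels agree on all bits `≤ i`. In the `i`-th coloring the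
edge `yz` is red, and one of `y`, `z` (say `z`) has a partner `w` among the other two with the
same bit `i`, so that `zw` is blue or green according to that bit. The last vertex `x` either
agrees with `y` at bit `i`, making `xy` the other one of blue and green, or it differs from `y`
at bit `i` and then, by the choice of `i`, already at a lower bit, making `xy` yellow.
-/

lemma Bool.eq_of_ne_of_ne {a b c : Bool} (hab : a ≠ b) (hbc : b ≠ c) : a = c := by
  decide +revert

namespace RainbowP4

open Finset

/-- The `i`-th coloring: `0` blue, `1` green, `2` red, `3` yellow. -/
def col (i u v : ℕ) : Fin 4 :=
  if u.testBit i = v.testBit i then (if u.testBit i then 1 else 0)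
  else if ∀ j < i, u.testBit j = v.testBit j then 2 else 3

lemma col_comm (i u v : ℕ) : col i u v = col i v u := by
  simp only [col, eq_comm (a := u.testBit _)]
  split_ifs <;> simp_all

def IsRainbowPath {α β : Type*} (c : α → α → β) (x y z w : α) : Prop :=
  c x y ≠ c y z ∧ c y z ≠ c z w ∧ c x y ≠ c z w

lemma isRainbowPath_col {i x y z w : ℕ}
    (hyz : ∀ j < i, y.testBit j = z.testBit j) (hyz_i : y.testBit i ≠ z.testBit i)
    (hzw : z.testBit i = w.testBit i) (hxz : ∃ j ≤ i, x.testBit j ≠ z.testBit j) :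
    IsRainbowPath (col i) x y z w := by
  have hred : col i y z = 2 := by simp only [col, if_neg hyz_i, if_pos hyz]
  have hzw' : col i z w = if z.testBit i then 1 else 0 := by simp only [col, if_pos hzw]
  have hxy : col i x y ≠ 2 ∧ col i x y ≠ if z.testBit i then 1 else 0 := by
    by_cases hxy_i : x.testBit i = y.testBit i
    · revert hyz_i
      simp only [col, hxy_i, if_true]
      cases y.testBit i <;> cases z.testBit i <;> decide
    · obtain ⟨j, hji, hj⟩ := hxz
      have hxz_i : x.testBit i = z.testBit i := Bool.eq_of_ne_of_ne hxy_i hyz_i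
      have hji : j < i := lt_of_le_of_ne hji (by rintro rfl; exact hj hxz_i)
      have hlow : ¬ ∀ k < i, x.testBit k = y.testBit k :=
        fun h => hj ((h j hji).trans (hyz j hji))
      simp only [col, hxy_i, hlow, if_false]
      cases z.testBit i <;> decide
  refine ⟨hred ▸ hxy.1, ?_, hzw' ▸ hxy.2⟩
  rw [hred, hzw']
  cases z.testBit i <;> decide

lemma exists_testBit_ne_of_lt_two_pow {T u v : ℕ} (hu : u < 2 ^ T) (hv : v < 2 ^ T)
    (huv : u ≠ v) : ∃ j < T, u.testBit j ≠ v.testBit j := by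
  by_contra! h
  refine huv (Nat.eq_of_testBit_eq fun j => ?_)
  rcases lt_or_ge j T with hj | hj
  · exact h j hj
  · have hT : 2 ^ T ≤ 2 ^ j := Nat.pow_le_pow_right two_pos hj
    rw [Nat.testBit_eq_false_of_lt (hu.trans_le hT), Nat.testBit_eq_false_of_lt (hv.trans_le hT)]

lemma exists_split_level {n T : ℕ} (hn : n ≤ 2 ^ T) {S : Finset (Fin n)} (hS : 1 < #S) :
    ∃ i < T, ∃ y ∈ S, ∃ z ∈ S, (∀ j < i, (y : ℕ).testBit j = (z : ℕ).testBit j) ∧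
      (y : ℕ).testBit i ≠ (z : ℕ).testBit i ∧
      ∀ u ∈ S, ∀ v ∈ S, u ≠ v → ∃ j ≤ i, (u : ℕ).testBit j ≠ (v : ℕ).testBit j := by
  let P k := ∃ y ∈ S, ∃ z ∈ S, y ≠ z ∧ ∀ j < k, (y : ℕ).testBit j = (z : ℕ).testBit j
  have hP0 : P 0 := by
    obtain ⟨y, hy, z, hz, hyz⟩ := one_lt_card.1 hS
    exact ⟨y, hy, z, hz, hyz, by simp⟩
  have hPT : ¬ P T := by
    rintro ⟨y, hy, z, hz, hyz, hagree⟩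
    obtain ⟨j, hj, hne⟩ := exists_testBit_ne_of_lt_two_pow (y.2.trans_le hn) (z.2.trans_le hn)
      (Fin.val_ne_of_ne hyz)
    exact hne (hagree j hj)
  set i := Nat.findGreatest P T
  have hi : P i := Nat.findGreatest_spec (Nat.zero_le T) hP0
  have hiT : i < T := (Nat.findGreatest_le T).lt_of_ne fun h => hPT (h ▸ hi)
  have hi_succ : ¬ P (i + 1) := Nat.findGreatest_is_greatest (Nat.lt_succ_self i) hiT
  obtain ⟨y, hy, z, hz, hyz, hagree⟩ := hi
  refine ⟨i, hiT, y, hy, z, hz, hagree, fun h => hi_succ ⟨y, hy, z, hz, hyz, ?_⟩, ?_⟩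
  · intro j hj
    rcases Nat.lt_succ_iff_lt_or_eq.1 hj with hj | rfl
    exacts [hagree j hj, h]
  · intro u hu v hv huv
    by_contra! h
    exact hi_succ ⟨u, hu, v, hv, huv, fun j hj => h j (Nat.lt_succ_iff.1 hj)⟩

lemma exists_eq_insert_pair_of_card_eq_four {α : Type*} [DecidableEq α] {S : Finset α}
    (hS : #S = 4) {y z : α} (hy : y ∈ S) (hz : z ∈ S) (hyz : y ≠ z) :
    ∃ u v, u ≠ v ∧ u ≠ y ∧ u ≠ z ∧ v ≠ y ∧ v ≠ z ∧ S = {y, z, u, v} := by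
  have hz' : z ∈ S.erase y := mem_erase.2 ⟨hyz.symm, hz⟩
  obtain ⟨u, v, huv, hrest⟩ := card_eq_two.1 (by
    rw [card_erase_of_mem hz', card_erase_of_mem hy, hS] : #((S.erase y).erase z) = 2)
  have hu : u ∈ (S.erase y).erase z := hrest ▸ mem_insert_self u {v}
  have hv : v ∈ (S.erase y).erase z := hrest ▸ mem_insert_of_mem (mem_singleton_self v)
  simp only [mem_erase] at hu hv
  exact ⟨u, v, huv, hu.2.1, hu.1, hv.2.1, hv.1, by rw [← hrest, insert_erase hz', insert_erase hy]⟩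

lemma exists_isRainbowPath_col {n T : ℕ} (hn : n ≤ 2 ^ T) {S : Finset (Fin n)} (hS : #S = 4) :
    ∃ i < T, ∃ x y z w : Fin n, x ≠ y ∧ x ≠ z ∧ x ≠ w ∧ y ≠ z ∧ y ≠ w ∧ z ≠ w ∧
      {x, y, z, w} = S ∧ IsRainbowPath (fun u v : Fin n => col i u v) x y z w := by
  obtain ⟨i, hiT, y, hy, z, hz, hagree, hsplit, hsep⟩ := exists_split_level hn (by omega : 1 < #S)
  have hyz : y ≠ z := by rintro rfl; exact hsplit rfl
  obtain ⟨u, v, huv, huy, huz, hvy, hvz, rfl⟩ :=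
    exists_eq_insert_pair_of_card_eq_four hS hy hz hyz
  have hu : u ∈ ({y, z, u, v} : Finset (Fin n)) := by simp
  have hv : v ∈ ({y, z, u, v} : Finset (Fin n)) := by simp
  refine ⟨i, hiT, ?_⟩
  by_cases hzu : (z : ℕ).testBit i = (u : ℕ).testBit i
  · refine ⟨v, y, z, u, hvy, hvz, huv.symm, hyz, huy.symm, huz.symm, ?_,
      isRainbowPath_col hagree hsplit hzu (hsep v hv z hz hvz)⟩
    grind
  by_cases hzv : (z : ℕ).testBit i = (v : ℕ).testBit i
  · refine ⟨u, y, z, v, huy, huz, huv, hyz, hvy.symm, hvz.symm, ?_,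
      isRainbowPath_col hagree hsplit hzv (hsep u hu z hz huz)⟩
    grind
  · refine ⟨v, z, y, u, hvz, hvy, huv.symm, hyz.symm, huz.symm, huy.symm, ?_,
      isRainbowPath_col (fun j hj => (hagree j hj).symm) (Ne.symm hsplit)
        (Bool.eq_of_ne_of_ne hsplit hzu) (hsep v hv y hy hvy)⟩
    grind

end RainbowP4

open RainbowP4 in
theorem stmt_10_general (n : ℕ) :
    ∃ c : Fin (Nat.clog 2 n) → Sym2 (Fin n) → Fin 4,
      ∀ a b d e : Fin n, a ≠ b → a ≠ d → a ≠ e → b ≠ d → b ≠ e → d ≠ e →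
        ∃ (i : Fin (Nat.clog 2 n)) (x y z w : Fin n),
          x ≠ y ∧ x ≠ z ∧ x ≠ w ∧ y ≠ z ∧ y ≠ w ∧ z ≠ w ∧
          ({x, y, z, w} : Finset (Fin n)) = {a, b, d, e} ∧
          c i s(x, y) ≠ c i s(y, z) ∧ c i s(y, z) ≠ c i s(z, w) ∧
          c i s(x, y) ≠ c i s(z, w) := by
  refine ⟨fun i => Sym2.lift ⟨fun u v => col i u v, fun u v => col_comm i u v⟩, ?_⟩
  intro a b d e hab had hae hbd hbe hde
  have hcard : ({a, b, d, e} : Finset (Fin n)).card = 4 :=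
    Finset.card_eq_four.2 ⟨a, b, d, e, hab, had, hae, hbd, hbe, hde, rfl⟩
  obtain ⟨i, hi, x, y, z, w, hxy, hxz, hxw, hyz, hyw, hzw, hS, hrainbow⟩ :=
    exists_isRainbowPath_col (Nat.le_pow_clog one_lt_two n) hcard
  exact ⟨⟨i, hi⟩, x, y, z, w, hxy, hxz, hxw, hyz, hyw, hzw, hS, hrainbow⟩

/-- For every `n ≥ 4` there exist `⌈log₂ n⌉` edge-colorings of `K_n`, each with 4
colors, such that every 4-set of vertices carries, in at least one of the colorings,
a rainbow `P_4` (a path on the four vertices whose three edges get distinct colors). -/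
theorem stmt_10 (n : ℕ) (hn : 4 ≤ n) :
    ∃ c : Fin (Nat.clog 2 n) → Sym2 (Fin n) → Fin 4,
      ∀ a b d e : Fin n, a ≠ b → a ≠ d → a ≠ e → b ≠ d → b ≠ e → d ≠ e →
        ∃ (i : Fin (Nat.clog 2 n)) (x y z w : Fin n),
          x ≠ y ∧ x ≠ z ∧ x ≠ w ∧ y ≠ z ∧ y ≠ w ∧ z ≠ w ∧
          ({x, y, z, w} : Finset (Fin n)) = {a, b, d, e} ∧
          c i s(x, y) ≠ c i s(y, z) ∧ c i s(y, z) ≠ c i s(z, w) ∧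
          c i s(x, y) ≠ c i s(z, w) :=
  stmt_10_general n
end

section
/- Let a,b,c,d be four distinct binary strings of length t. Then either there exists a coordinate i where exactly two of a_i, b_i, c_i, d_i equal 0, or there exist at least three coordinates in each of which exactly one of the four strings differs from the other three. -/
/-! At a coordinate without a 2–2 split, the four values are either all equal or one string is
singled out. If at most two coordinates single out a string, at most two of the four strings are
ever singled out, and the remaining two agree at every coordinate, contradicting distinctness. -/

open Finset Function

theorem le_card_add_one_of_forall_singleOut {n : ℕ} {ι α : Type*} (s : Fin n → ι → α)
    (hs : Injective s) (T : Finset ι)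
    (hsplit : ∀ i ∈ T, ∃ m, ∀ p q, p ≠ m → q ≠ m → s p i = s q i)
    (hconst : ∀ i ∉ T, ∀ p q, s p i = s q i) :
    n ≤ #T + 1 := by
  by_contra! hT
  have : Nonempty (Fin n) := ⟨⟨0, by omega⟩⟩
  choose! m hm using hsplit
  have hcompl : 1 < #(T.image m)ᶜ := by
    have := card_image_le (s := T) (f := m)
    rw [card_compl, Fintype.card_fin]
    omega
  obtain ⟨p, hp, q, hq, hpq⟩ := one_lt_card.mp hcompl
  rw [mem_compl, mem_image, not_exists] at hp hq
  refine hpq (hs (funext fun i => ?_))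
  by_cases hi : i ∈ T
  · exact hm i hi p q (fun h => hp i ⟨hi, h.symm⟩) (fun h => hq i ⟨hi, h.symm⟩)
  · exact hconst i hi p q

lemma exists_singleOut_of_count_false_odd (v : Fin 4 → Bool)
    (h : [v 0, v 1, v 2, v 3].count false = 1 ∨ [v 0, v 1, v 2, v 3].count false = 3) :
    ∃ m, ∀ p q, p ≠ m → q ≠ m → v p = v q := by
  revert v; decide

lemma eq_of_count_false_even_ne_two (v : Fin 4 → Bool)
    (h2 : [v 0, v 1, v 2, v 3].count false ≠ 2)
    (h13 : ¬([v 0, v 1, v 2, v 3].count false = 1 ∨ [v 0, v 1, v 2, v 3].count false = 3))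
    (p q : Fin 4) : v p = v q := by
  revert v p q; decide

/-- For four pairwise distinct binary strings `a,b,c,d` of length `t`, either some
coordinate has exactly two of the four values equal to 0 (`false`), or there are at
least three coordinates at each of which exactly one of the four strings differs from
the other three (the count of `false`s among the four values is 1 or 3). -/
theorem stmt_11 (t : ℕ) (a b c d : Fin t → Bool)
    (hab : a ≠ b) (hac : a ≠ c) (had : a ≠ d) (hbc : b ≠ c) (hbd : b ≠ d) (hcd : c ≠ d) :
    (∃ i : Fin t, ([a i, b i, c i, d i].count false) = 2) ∨
    (∃ i j k : Fin t, i ≠ j ∧ i ≠ k ∧ j ≠ k ∧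
      (([a i, b i, c i, d i].count false) = 1 ∨ ([a i, b i, c i, d i].count false) = 3) ∧
      (([a j, b j, c j, d j].count false) = 1 ∨ ([a j, b j, c j, d j].count false) = 3) ∧
      (([a k, b k, c k, d k].count false) = 1 ∨ ([a k, b k, c k, d k].count false) = 3)) := by
  by_cases h2 : ∃ i : Fin t, ([a i, b i, c i, d i].count false) = 2
  · exact Or.inl h2
  simp only [not_exists] at h2
  right
  have hinj : Injective ![a, b, c, d] := by
    intro p q h
    fin_cases p <;> fin_cases q <;> simp at h ⊢ <;>
      first | exact absurd h ‹_› | exact absurd h.symm ‹_›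
  let T := univ.filter fun i : Fin t =>
    [a i, b i, c i, d i].count false = 1 ∨ [a i, b i, c i, d i].count false = 3
  have hT : 4 ≤ #T + 1 :=
    le_card_add_one_of_forall_singleOut ![a, b, c, d] hinj T
      (fun i hi => exists_singleOut_of_count_false_odd (![a, b, c, d] · i) (mem_filter.mp hi).2)
      (fun i hi => eq_of_count_false_even_ne_two (![a, b, c, d] · i) (h2 i)
        (fun h => hi (mem_filter.mpr ⟨mem_univ i, h⟩)))
  obtain ⟨i, hi, j, hj, k, hk, hij, hik, hjk⟩ := two_lt_card.mp (by omega : 2 < #T)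
  exact ⟨i, j, k, hij, hik, hjk, (mem_filter.mp hi).2, (mem_filter.mp hj).2, (mem_filter.mp hk).2⟩
end

section
/- p(n) ≤ 2⌈log₂ n⌉, where p(n) is the minimum number of 3-edge-colorings of K_n needed so that every 4-element vertex subset contains, in at least one coloring, a P_4 whose three edges receive three distinct colors. -/
/-! Label the vertices of `K_n` in binary. For a 4-set `v₀ < v₁ < v₂ < v₃` pick a bit `j` at
which `v₁` has `0` and `v₂` has `1`. Coloring each edge `{u < v}` by the pair of `j`-th bits of
`u` and `v` makes `v₀v₁v₂v₃` or `v₀v₂v₁v₃` a rainbow `P₄`, whatever the bits of `v₀` and `v₃`.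
Each of these `⌈log₂ n⌉` 4-colorings splits into two 3-colorings through a length-2 ternary code
on the four colors in which any three codewords are trifferent at some coordinate; the three
colors of the rainbow path then stay distinct in one of the two. -/

open Finset

def Trifferent {α : Type*} (p q r : α) : Prop := p ≠ q ∧ q ≠ r ∧ p ≠ r

instance {α : Type*} [DecidableEq α] (p q r : α) : Decidable (Trifferent p q r) :=
  inferInstanceAs (Decidable (_ ∧ _ ∧ _))

def HasRainbowP4 {V α : Type*} [DecidableEq V] (c : Sym2 V → α) (S : Finset V) : Prop :=
  ∃ x y z w : V, x ≠ y ∧ x ≠ z ∧ x ≠ w ∧ y ≠ z ∧ y ≠ w ∧ z ≠ w ∧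
    ({x, y, z, w} : Finset V) = S ∧ Trifferent (c s(x, y)) (c s(y, z)) (c s(z, w))

theorem HasRainbowP4.exists_coord {V α β ι : Type*} [DecidableEq V] {c : Sym2 V → α}
    {S : Finset V} (hc : HasRainbowP4 c S) {f : α → ι → β}
    (hf : ∀ p q r, Trifferent p q r → ∃ k, Trifferent (f p k) (f q k) (f r k)) :
    ∃ k, HasRainbowP4 (fun e => f (c e) k) S := by
  obtain ⟨x, y, z, w, hxy, hxz, hxw, hyz, hyw, hzw, hS, hrain⟩ := hc
  obtain ⟨k, hk⟩ := hf _ _ _ hrain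
  exact ⟨k, x, y, z, w, hxy, hxz, hxw, hyz, hyw, hzw, hS, hk⟩

def pairCode : Bool × Bool → Fin 2 → Fin 3
  | (false, false) => ![0, 0]
  | (false, true) => ![0, 1]
  | (true, false) => ![1, 2]
  | (true, true) => ![2, 2]

theorem pairCode_trifferent :
    ∀ p q r, Trifferent p q r → ∃ k, Trifferent (pairCode p k) (pairCode q k) (pairCode r k) := by
  decide

section LinearOrder

variable {V : Type*} [LinearOrder V]

def orderedBitColoring (b : V → Bool) : Sym2 V → Bool × Bool :=
  Sym2.lift ⟨fun u v => (b (min u v), b (max u v)), fun u v => by simp [min_comm, max_comm]⟩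

theorem orderedBitColoring_of_lt (b : V → Bool) {u v : V} (h : u < v) :
    orderedBitColoring b s(u, v) = (b u, b v) := by
  simp [orderedBitColoring, h.le]

theorem orderedBitColoring_of_gt (b : V → Bool) {u v : V} (h : v < u) :
    orderedBitColoring b s(u, v) = (b v, b u) := by
  rw [Sym2.eq_swap, orderedBitColoring_of_lt b h]

theorem hasRainbowP4_orderedBitColoring (b : V → Bool) {v₀ v₁ v₂ v₃ : V}
    (h₀₁ : v₀ < v₁) (h₁₂ : v₁ < v₂) (h₂₃ : v₂ < v₃) (hb₁ : b v₁ = false) (hb₂ : b v₂ = true) :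
    HasRainbowP4 (orderedBitColoring b) {v₀, v₁, v₂, v₃} := by
  have h₀₂ := h₀₁.trans h₁₂
  have h₁₃ := h₁₂.trans h₂₃
  have h₀₃ := h₀₂.trans h₂₃
  cases hb₀ : b v₀
  case false =>
    refine ⟨v₀, v₁, v₂, v₃, h₀₁.ne, h₀₂.ne, h₀₃.ne, h₁₂.ne, h₁₃.ne, h₂₃.ne, rfl, ?_⟩
    simp [Trifferent, orderedBitColoring_of_lt, *]
  cases hb₃ : b v₃
  case false =>
    refine ⟨v₀, v₂, v₁, v₃, h₀₂.ne, h₀₁.ne, h₀₃.ne, h₁₂.ne', h₂₃.ne, h₁₃.ne,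
      by rw [insert_comm v₂], ?_⟩
    simp [Trifferent, orderedBitColoring_of_lt, orderedBitColoring_of_gt, *]
  case true =>
    refine ⟨v₀, v₁, v₂, v₃, h₀₁.ne, h₀₂.ne, h₀₃.ne, h₁₂.ne, h₁₃.ne, h₂₃.ne, rfl, ?_⟩
    simp [Trifferent, orderedBitColoring_of_lt, *]

theorem Finset.exists_lt_lt_lt_of_card_eq_four {S : Finset V} (hS : #S = 4) :
    ∃ v₀ v₁ v₂ v₃, v₀ < v₁ ∧ v₁ < v₂ ∧ v₂ < v₃ ∧ S = {v₀, v₁, v₂, v₃} := by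
  set f := S.orderEmbOfFin hS
  refine ⟨f 0, f 1, f 2, f 3, by simp, by simp, by simp, ?_⟩
  rw [← S.image_orderEmbOfFin_univ hS, show (univ : Finset (Fin 4)) = {0, 1, 2, 3} by decide]
  simp only [image_insert, image_singleton, f]

end LinearOrder

def binaryCodeColoring (n K : ℕ) (i : Fin (2 * K)) (e : Sym2 (Fin n)) : Fin 3 :=
  pairCode (orderedBitColoring (fun v : Fin n => v.val.testBit (finProdFinEquiv.symm i).2) e)
    (finProdFinEquiv.symm i).1

theorem Nat.exists_testBit_false_true_of_lt {a b K : ℕ} (hab : a < b) (hb : b < 2 ^ K) :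
    ∃ j < K, a.testBit j = false ∧ b.testBit j = true := by
  obtain ⟨j, ha, hb'⟩ : ∃ j, a.testBit j = false ∧ b.testBit j = true := by
    by_contra! h
    exact hab.not_ge (Nat.le_of_testBit fun j hj => by simpa [hj] using h j)
  refine ⟨j, ?_, ha, hb'⟩
  by_contra! hKj
  simp [Nat.testBit_eq_false_of_lt (hb.trans_le (Nat.pow_le_pow_right two_pos hKj))] at hb'

theorem stmt_13_general (n : ℕ) :
    ∃ c : Fin (2 * Nat.clog 2 n) → Sym2 (Fin n) → Fin 3,
      ∀ a b d e : Fin n, a ≠ b → a ≠ d → a ≠ e → b ≠ d → b ≠ e → d ≠ e →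
        ∃ (i : Fin (2 * Nat.clog 2 n)) (x y z w : Fin n),
          x ≠ y ∧ x ≠ z ∧ x ≠ w ∧ y ≠ z ∧ y ≠ w ∧ z ≠ w ∧
          ({x, y, z, w} : Finset (Fin n)) = {a, b, d, e} ∧
          c i s(x, y) ≠ c i s(y, z) ∧ c i s(y, z) ≠ c i s(z, w) ∧
          c i s(x, y) ≠ c i s(z, w) := by
  refine ⟨binaryCodeColoring n _, ?_⟩
  intro a b d e hab had hae hbd hbe hde
  have hcard : #({a, b, d, e} : Finset (Fin n)) = 4 := by
    rw [card_insert_of_notMem (by simp [hab, had, hae]),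
      card_insert_of_notMem (by simp [hbd, hbe]), card_pair hde]
  obtain ⟨v₀, v₁, v₂, v₃, h₀₁, h₁₂, h₂₃, hS⟩ := exists_lt_lt_lt_of_card_eq_four hcard
  have hv₂ : (v₂ : ℕ) < 2 ^ Nat.clog 2 n := v₂.isLt.trans_le (Nat.le_pow_clog one_lt_two n)
  obtain ⟨j, hj, hb₁, hb₂⟩ := Nat.exists_testBit_false_true_of_lt h₁₂ hv₂
  obtain ⟨k, hk⟩ := (hasRainbowP4_orderedBitColoring (fun v : Fin n => v.val.testBit j)
    h₀₁ h₁₂ h₂₃ hb₁ hb₂).exists_coord pairCode_trifferent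
  refine ⟨finProdFinEquiv (k, ⟨j, hj⟩), ?_⟩
  rw [hS]
  simp only [binaryCodeColoring, Equiv.symm_apply_apply]
  exact hk

/-- `p(n) ≤ 2⌈log₂ n⌉`: there exist `2⌈log₂ n⌉` edge-colorings of `K_n`, each with
3 colors, such that every 4-set of vertices carries, in at least one of the colorings,
a `P_4` whose three edges receive three distinct colors. -/
theorem stmt_13 (n : ℕ) (hn : 4 ≤ n) :
    ∃ c : Fin (2 * Nat.clog 2 n) → Sym2 (Fin n) → Fin 3,
      ∀ a b d e : Fin n, a ≠ b → a ≠ d → a ≠ e → b ≠ d → b ≠ e → d ≠ e →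
        ∃ (i : Fin (2 * Nat.clog 2 n)) (x y z w : Fin n),
          x ≠ y ∧ x ≠ z ∧ x ≠ w ∧ y ≠ z ∧ y ≠ w ∧ z ≠ w ∧
          ({x, y, z, w} : Finset (Fin n)) = {a, b, d, e} ∧
          c i s(x, y) ≠ c i s(y, z) ∧ c i s(y, z) ≠ c i s(z, w) ∧
          c i s(x, y) ≠ c i s(z, w) :=
  stmt_13_general n
end

section
/- If an edge-coloring of K_4 uses at least 4 colors, then K_4 contains at least 4 distinct rainbow copies of P_4 (paths on 4 vertices whose 3 edges have 3 distinct colors). -/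
/-!
A Hamiltonian path of `K_4` consists of a perfect matching (its two end edges) and one of the four
other edges (its middle edge); it is rainbow exactly when the matching is bichromatic and the middle
edge has a third colour. With `k ≥ 4` colours, a bichromatic matching admits at least `k - 2 ≥ 2`
such middle edges, and at most two of the three matchings are monochromatic. Two bichromatic
matchings thus give four rainbow paths. If only one matching is bichromatic, the colours are its two
and one for each monochromatic matching, so these four are distinct and all four edges outside the
bichromatic matching are valid middle edges.
-/

open Finset

theorem Finset.card_image_univ_le_card_image_add_card_filter {E C : Type*} [Fintype E]
    [DecidableEq C] (c : E → C) (s : Finset E) :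
    #(univ.image c) ≤ #(s.image c) + #{e | c e ∉ s.image c} := by
  calc #(univ.image c) ≤ #(s.image c ∪ ({e | c e ∉ s.image c} : Finset E).image c) := by
        refine card_le_card fun col hcol => ?_
        obtain ⟨e, -, rfl⟩ := mem_image.1 hcol
        by_cases he : c e ∈ s.image c
        · exact mem_union_left _ he
        · exact mem_union_right _ (mem_image_of_mem c (mem_filter.2 ⟨mem_univ e, he⟩))
    _ ≤ #(s.image c) + #{e | c e ∉ s.image c} :=
        (card_union_le _ _).trans (by gcongr; exact card_image_le)

namespace K4

section Coloring

variable {C : Type*} [DecidableEq C] (c : Fin 3 × Fin 2 → C)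

def freshEdges (i : Fin 3) : Finset (Fin 3 × Fin 2) :=
  {e | c e ≠ c (i, 0) ∧ c e ≠ c (i, 1)}

def rainbowPairs : Finset (Fin 3 × (Fin 3 × Fin 2)) :=
  {p | c (p.1, 0) ≠ c (p.1, 1) ∧ p.2 ∈ freshEdges c p.1}

theorem card_image_le_card_freshEdges_add_two (i : Fin 3) :
    #(univ.image c) ≤ #(freshEdges c i) + 2 := by
  have hfresh : ({e | c e ∉ ({(i, 0), (i, 1)} : Finset _).image c} : Finset _) =
      freshEdges c i := by
    ext e
    simp [freshEdges, not_or]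
  have hpair : #(({(i, 0), (i, 1)} : Finset (Fin 3 × Fin 2)).image c) ≤ 2 :=
    card_image_le.trans card_le_two
  have := card_image_univ_le_card_image_add_card_filter c {(i, 0), (i, 1)}
  rw [hfresh] at this
  omega

theorem exists_bichromatic (hc : 4 ≤ #(univ.image c)) : ∃ i, c (i, 0) ≠ c (i, 1) := by
  by_contra! hmono
  have hsub : univ.image c ⊆ univ.image fun i => c (i, 0) := by
    rintro _ hcol
    obtain ⟨⟨i, t⟩, -, rfl⟩ := mem_image.1 hcol
    refine mem_image.2 ⟨i, mem_univ i, ?_⟩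
    fin_cases t
    · rfl
    · exact hmono i
  have := (card_le_card hsub).trans card_image_le
  simp only [card_univ, Fintype.card_fin] at this
  omega

theorem four_le_card_freshEdges (hc : 4 ≤ #(univ.image c)) (i : Fin 3)
    (hmono : ∀ j ≠ i, c (j, 0) = c (j, 1)) : 4 ≤ #(freshEdges c i) := by
  set f := fun j => c (j, 0)
  have hcol : ∀ j t, j ≠ i → c (j, t) = f j := by
    intro j t hj
    fin_cases t
    · rfl
    · exact (hmono j hj).symm
  have hsub : univ.image c ⊆ insert (c (i, 1)) (univ.image f) := by
    rintro _ hcol'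
    obtain ⟨⟨j, t⟩, -, rfl⟩ := mem_image.1 hcol'
    by_cases hj : j = i
    · subst hj
      fin_cases t
      · exact mem_insert_of_mem (mem_image_of_mem f (mem_univ j))
      · exact mem_insert_self _ _
    · exact hcol j t hj ▸ mem_insert_of_mem (mem_image_of_mem f (mem_univ j))
  have hcard := (card_le_card hsub).trans (card_insert_le _ _)
  have hle : #(univ.image f) ≤ #(univ : Finset (Fin 3)) := card_image_le
  have hinj : Function.Injective f := by
    rw [← Set.injOn_univ, ← coe_univ, ← card_image_iff]
    simp only [card_univ, Fintype.card_fin] at hle ⊢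
    omega
  have hnew : c (i, 1) ∉ univ.image f := fun h => by
    rw [insert_eq_of_mem h] at hsub
    have := (card_le_card hsub).trans hle
    simp only [card_univ, Fintype.card_fin] at this
    omega
  have hout : ({e | e.1 ≠ i} : Finset (Fin 3 × Fin 2)) ⊆ freshEdges c i := by
    rintro ⟨j, t⟩ hj
    replace hj : j ≠ i := (mem_filter.1 hj).2
    simp only [freshEdges, mem_filter, mem_univ, true_and, hcol j t hj]
    exact ⟨hinj.ne hj, fun h => hnew (h ▸ mem_image_of_mem f (mem_univ j))⟩
  have hfour : ∀ i : Fin 3, #({e | e.1 ≠ i} : Finset (Fin 3 × Fin 2)) = 4 := by decide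
  exact hfour i ▸ card_le_card hout

theorem four_le_card_rainbowPairs (hc : 4 ≤ #(univ.image c)) : 4 ≤ #(rainbowPairs c) := by
  have hsub : ∀ i, c (i, 0) ≠ c (i, 1) → {i} ×ˢ freshEdges c i ⊆ rainbowPairs c := by
    rintro i hi ⟨j, e⟩ hp
    obtain ⟨hj, he⟩ := mem_product.1 hp
    obtain rfl : j = i := mem_singleton.1 hj
    exact mem_filter.2 ⟨mem_univ _, hi, he⟩
  obtain ⟨i, hi⟩ := exists_bichromatic c hc
  by_cases h : ∃ j ≠ i, c (j, 0) ≠ c (j, 1)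
  · obtain ⟨j, hji, hj⟩ := h
    have hdisj : Disjoint ({i} ×ˢ freshEdges c i) ({j} ×ˢ freshEdges c j) :=
      disjoint_product.2 (Or.inl (disjoint_singleton.2 hji.symm))
    calc 4 ≤ #(freshEdges c i) + #(freshEdges c j) := by
          have := card_image_le_card_freshEdges_add_two c i
          have := card_image_le_card_freshEdges_add_two c j
          omega
      _ = #({i} ×ˢ freshEdges c i ∪ {j} ×ˢ freshEdges c j) := by
          rw [card_union_of_disjoint hdisj, card_product, card_product]
          simp
      _ ≤ #(rainbowPairs c) := card_le_card (union_subset (hsub i hi) (hsub j hj))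
  · push Not at h
    calc 4 ≤ #(freshEdges c i) := four_le_card_freshEdges c hc i h
      _ = #({i} ×ˢ freshEdges c i) := by simp
      _ ≤ #(rainbowPairs c) := card_le_card (hsub i hi)

theorem snd_fst_ne_of_mem_rainbowPairs {p : Fin 3 × (Fin 3 × Fin 2)}
    (hp : p ∈ rainbowPairs c) : p.2.1 ≠ p.1 := by
  obtain ⟨i, j, t⟩ := p
  rintro (rfl : j = i)
  simp only [rainbowPairs, freshEdges, mem_filter, mem_univ, true_and] at hp
  fin_cases t <;> simp at hp

end Coloring

/-- `edge (i, 0)` and `edge (i, 1)` form the `i`-th perfect matching of `K_4`. -/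
def edge : Fin 3 × Fin 2 → Sym2 (Fin 4)
  | (0, 0) => s(0, 1) | (0, 1) => s(2, 3)
  | (1, 0) => s(0, 2) | (1, 1) => s(1, 3)
  | (2, 0) => s(0, 3) | (2, 1) => s(1, 2)

/-- For `e.1 ≠ i`, the Hamiltonian path with end edges the matching `i` and middle edge `e`. -/
def path (i : Fin 3) (e : Fin 3 × Fin 2) : Finset (Sym2 (Fin 4)) :=
  {edge (i, 0), edge e, edge (i, 1)}

theorem range_edge : Set.range edge = {e | ¬ e.IsDiag} := by
  ext e
  revert e
  decide

theorem exists_path_vertices (i : Fin 3) (e : Fin 3 × Fin 2) (he : e.1 ≠ i) :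
    ∃ x y z w : Fin 4, x ≠ y ∧ x ≠ z ∧ x ≠ w ∧ y ≠ z ∧ y ≠ w ∧ z ≠ w ∧
      edge (i, 0) = s(x, y) ∧ edge e = s(y, z) ∧ edge (i, 1) = s(z, w) := by
  revert i e
  decide

theorem injOn_uncurry_path : Set.InjOn (Function.uncurry path) {p | p.2.1 ≠ p.1} := by
  unfold Set.InjOn
  decide

theorem ncard_colors_eq {C : Type*} [DecidableEq C] (c : Sym2 (Fin 4) → C) :
    Set.ncard {col : C | ∃ u v : Fin 4, u ≠ v ∧ c s(u, v) = col} = #(univ.image (c ∘ edge)) := by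
  rw [← Set.ncard_coe_finset, coe_image, coe_univ, Set.image_univ, Set.range_comp, range_edge]
  congr 1
  ext col
  simp [Sym2.exists]

end K4

open K4

/-- If an edge-coloring of `K_4` uses at least 4 colors, then there are at least 4
distinct rainbow copies of `P_4` (distinct edge sets of spanning paths whose three
edges get pairwise distinct colors). -/
theorem stmt_14 {C : Type*} (c : Sym2 (Fin 4) → C)
    (hcolors : 4 ≤ Set.ncard {col : C | ∃ u v : Fin 4, u ≠ v ∧ c s(u, v) = col}) :
    4 ≤ Set.ncard {E : Finset (Sym2 (Fin 4)) |
      ∃ x y z w : Fin 4, x ≠ y ∧ x ≠ z ∧ x ≠ w ∧ y ≠ z ∧ y ≠ w ∧ z ≠ w ∧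
        E = {s(x, y), s(y, z), s(z, w)} ∧
        c s(x, y) ≠ c s(y, z) ∧ c s(y, z) ≠ c s(z, w) ∧ c s(x, y) ≠ c s(z, w)} := by
  classical
  rw [ncard_colors_eq] at hcolors
  have hinj : Set.InjOn (Function.uncurry path) (rainbowPairs (c ∘ edge)) := fun p hp q hq =>
    injOn_uncurry_path (snd_fst_ne_of_mem_rainbowPairs _ hp) (snd_fst_ne_of_mem_rainbowPairs _ hq)
  calc 4 ≤ #(rainbowPairs (c ∘ edge)) := four_le_card_rainbowPairs _ hcolors
    _ = Set.ncard ((rainbowPairs (c ∘ edge)).image (Function.uncurry path) :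
          Set (Finset (Sym2 (Fin 4)))) := by
        rw [Set.ncard_coe_finset, card_image_of_injOn hinj]
    _ ≤ _ := by
        refine Set.ncard_le_ncard (fun E hE => ?_) (Set.toFinite _)
        obtain ⟨⟨i, e⟩, hp, rfl⟩ := mem_image.1 hE
        obtain ⟨x, y, z, w, hxy, hxz, hxw, hyz, hyw, hzw, h0, he, h1⟩ :=
          exists_path_vertices i e (snd_fst_ne_of_mem_rainbowPairs _ hp)
        simp only [rainbowPairs, freshEdges, mem_filter, mem_univ, true_and, Function.comp,
          h0, he, h1] at hp
        exact ⟨x, y, z, w, hxy, hxz, hxw, hyz, hyw, hzw, by simp [path, h0, he, h1],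
          hp.2.1.symm, hp.2.2, hp.1⟩
end

section
/- The fourth OR-power of the Grötzsch graph M_4 = M(C_5) contains a clique of size 28; hence C_OR(M_4) ≥ 28^{1/4} > √5 = C_OR(C_5). -/
/-!
Shannon's clique `{(a, 2a)}` of `C₅ ⊠ C₅` gives 25 pairwise adjacent tuples `(a, 2a, b, 2b)` in
`C₅⁴`. Lifting one coordinate of each to its twin keeps them pairwise adjacent in `M(C₅)⁴`, since
a twin is adjacent to the neighbours of its original, and makes room for three tuples built on the
apex, which is adjacent to every twin. Concatenation multiplies cliques of OR-powers, so a
28-clique in the fourth power gives `28ᵏ ≤ ω(M(C₅)^{4k})`, whence every limit of `ω(M(C₅)ᵗ)^{1/t}`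
is at least `28^{1/4} > 25^{1/4} = √5`.
-/

open Filter Topology

/-- The OR-product of two simple graphs: `(g₁,h₁) ~ (g₂,h₂)` iff the pairs differ and
they are adjacent in at least one coordinate. -/
def orProd {V W : Type*} (G : SimpleGraph V) (H : SimpleGraph W) :
    SimpleGraph (V × W) where
  Adj p q := p ≠ q ∧ (G.Adj p.1 q.1 ∨ H.Adj p.2 q.2)
  symm := by
    constructor
    rintro p q ⟨hne, h | h⟩
    · exact ⟨hne.symm, Or.inl h.symm⟩
    · exact ⟨hne.symm, Or.inr h.symm⟩
  loopless := by constructor; rintro p ⟨hne, -⟩; exact hne rfl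

/-- The `t`-fold OR-power of a simple graph. -/
def orPow {V : Type*} (G : SimpleGraph V) (t : ℕ) : SimpleGraph (Fin t → V) where
  Adj f g := f ≠ g ∧ ∃ i, G.Adj (f i) (g i)
  symm := by
    constructor
    rintro f g ⟨hne, i, h⟩
    exact ⟨hne.symm, i, h.symm⟩
  loopless := by constructor; rintro f ⟨hne, -⟩; exact hne rfl

/-- The Mycielskian of a graph `G` on vertex set `V`: vertices `V ⊕ V ⊕ Unit`
(original vertices, twin vertices, apex `z`), with original edges, edges from the twin
`u_i` to the neighbors of `v_i`, and edges from every twin to the apex. -/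
def mycielskian {V : Type*} (G : SimpleGraph V) : SimpleGraph (V ⊕ V ⊕ Unit) where
  Adj x y :=
    (∃ a b, G.Adj a b ∧ ((x = Sum.inl a ∧ y = Sum.inl b) ∨
      (x = Sum.inl a ∧ y = Sum.inr (Sum.inl b)) ∨
      (x = Sum.inr (Sum.inl a) ∧ y = Sum.inl b))) ∨
    (∃ a : V, (x = Sum.inr (Sum.inl a) ∧ y = Sum.inr (Sum.inr ())) ∨
      (y = Sum.inr (Sum.inl a) ∧ x = Sum.inr (Sum.inr ())))
  symm := by
    constructor
    rintro x y (⟨a, b, hab, hc⟩ | ⟨a, hc⟩)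
    · exact Or.inl ⟨b, a, hab.symm, by tauto⟩
    · exact Or.inr ⟨a, by tauto⟩
  loopless := by
    constructor
    rintro x (⟨a, b, hab, (⟨h1, h2⟩ | ⟨h1, h2⟩ | ⟨h1, h2⟩)⟩ | ⟨a, (⟨h1, h2⟩ | ⟨h1, h2⟩)⟩) <;>
      rw [h1] at h2
    · injection h2 with h; exact G.loopless.irrefl _ (h ▸ hab)
    · simp at h2
    · simp at h2
    · simp at h2
    · simp at h2

/-- The five-cycle on `ZMod 5`. -/
def C5 : SimpleGraph (ZMod 5) where
  Adj a b := a - b = 1 ∨ b - a = 1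
  symm := by constructor; rintro a b (h | h) <;> [exact Or.inr h; exact Or.inl h]
  loopless := by constructor; rintro a (h | h) <;> rw [sub_self] at h <;> exact absurd h (by decide)

/-- The Grötzsch graph `M₄ = M(C₅)`. -/
def grotzsch : SimpleGraph (ZMod 5 ⊕ ZMod 5 ⊕ Unit) := mycielskian C5


namespace SimpleGraph

section Mycielskian

variable {V : Type*} (G : SimpleGraph V)

def MycielskianAdj : V ⊕ V ⊕ Unit → V ⊕ V ⊕ Unit → Prop
  | .inl a, .inl b | .inl a, .inr (.inl b) | .inr (.inl a), .inl b => G.Adj a b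
  | .inr (.inl _), .inr (.inr _) | .inr (.inr _), .inr (.inl _) => True
  | _, _ => False

instance [DecidableRel G.Adj] : DecidableRel G.MycielskianAdj
  | .inl a, .inl b | .inl a, .inr (.inl b) | .inr (.inl a), .inl b =>
    inferInstanceAs (Decidable (G.Adj a b))
  | .inr (.inl _), .inr (.inr _) | .inr (.inr _), .inr (.inl _) => instDecidableTrue
  | .inl _, .inr (.inr _) | .inr (.inl _), .inr (.inl _) | .inr (.inr _), .inl _
  | .inr (.inr _), .inr (.inr _) => instDecidableFalse

theorem mycielskian_adj_iff {x y : V ⊕ V ⊕ Unit} :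
    (mycielskian G).Adj x y ↔ G.MycielskianAdj x y := by
  rcases x with a | a | ⟨⟩ <;> rcases y with b | b | ⟨⟩ <;>
    simp [mycielskian, MycielskianAdj]

instance [DecidableRel G.Adj] : DecidableRel (mycielskian G).Adj := fun _ _ =>
  decidable_of_iff' _ G.mycielskian_adj_iff

end Mycielskian

section OrPower

variable {V W : Type*}

instance [DecidableEq V] (G : SimpleGraph V) [DecidableRel G.Adj] (t : ℕ) :
    DecidableRel (orPow G t).Adj := fun f g =>
  inferInstanceAs (Decidable (f ≠ g ∧ ∃ i, G.Adj (f i) (g i)))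

theorem IsNClique.map_iso {G : SimpleGraph V} {H : SimpleGraph W} {n : ℕ} {s : Finset V}
    (h : G.IsNClique n s) (e : G ≃g H) : H.IsNClique n (s.map e.toEquiv.toEmbedding) := by
  refine ⟨?_, (Finset.card_map _).trans h.card_eq⟩
  rw [Finset.coe_map]
  rintro _ ⟨x, hx, rfl⟩ _ ⟨y, hy, rfl⟩ hxy
  exact e.map_adj_iff.2 (h.isClique hx hy (ne_of_apply_ne _ hxy))

theorem orProd_adj_iff {G : SimpleGraph V} {H : SimpleGraph W} {p q : V × W} :
    (orProd G H).Adj p q ↔ G.Adj p.1 q.1 ∨ H.Adj p.2 q.2 :=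
  ⟨And.right, fun h => ⟨fun hpq => h.elim (·.ne congr($hpq.1)) (·.ne congr($hpq.2)), h⟩⟩

theorem orPow_adj_iff {G : SimpleGraph V} {t : ℕ} {f g : Fin t → V} :
    (orPow G t).Adj f g ↔ ∃ i, G.Adj (f i) (g i) :=
  ⟨And.right, fun ⟨i, hi⟩ => ⟨fun hfg => hi.ne congr($hfg i), i, hi⟩⟩

theorem IsNClique.orProd_product {G : SimpleGraph V} {H : SimpleGraph W} {m n : ℕ}
    {S : Finset V} {T : Finset W} (hS : G.IsNClique m S) (hT : H.IsNClique n T) :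
    (orProd G H).IsNClique (m * n) (S ×ˢ T) := by
  refine ⟨?_, by rw [Finset.card_product, hS.card_eq, hT.card_eq]⟩
  rintro ⟨x, y⟩ hxy ⟨x', y'⟩ hxy' hne
  simp only [Finset.coe_product, Set.mem_prod, Finset.mem_coe] at hxy hxy'
  rw [orProd_adj_iff]
  by_cases hx : x = x'
  · subst hx
    exact .inr (hT.isClique hxy.2 hxy'.2 fun hy => hne (by rw [hy]))
  · exact .inl (hS.isClique hxy.1 hxy'.1 hx)

def orPowAddIso (G : SimpleGraph V) (a b : ℕ) :
    orProd (orPow G a) (orPow G b) ≃g orPow G (a + b) where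
  toEquiv := Fin.appendEquiv a b
  map_rel_iff' {p q} := by
    obtain ⟨f, g⟩ := p
    obtain ⟨f', g'⟩ := q
    simp only [orProd_adj_iff, orPow_adj_iff, Fin.appendEquiv_apply]
    constructor
    · rintro ⟨i, hi⟩
      induction i using Fin.addCases with
      | left i => exact .inl ⟨i, by simpa using hi⟩
      | right j => exact .inr ⟨j, by simpa using hi⟩
    · rintro (⟨i, hi⟩ | ⟨j, hj⟩)
      · exact ⟨Fin.castAdd b i, by simpa using hi⟩
      · exact ⟨Fin.natAdd a j, by simpa using hj⟩

theorem exists_isNClique_orPow_mul {G : SimpleGraph V} {a m : ℕ} {S : Finset (Fin a → V)}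
    (hS : (orPow G a).IsNClique m S) (k : ℕ) :
    ∃ U : Finset (Fin (a * k) → V), (orPow G (a * k)).IsNClique (m ^ k) U := by
  induction k with
  | zero => exact ⟨{Fin.elim0 ∘ Fin.cast (mul_zero a)}, by simp⟩
  | succ k ih =>
    obtain ⟨U, hU⟩ := ih
    exact ⟨_, (hU.orProd_product hS).map_iso (orPowAddIso G (a * k) a)⟩

theorem pow_le_cliqueNum_orPow [Finite V] {G : SimpleGraph V} {a m : ℕ}
    {S : Finset (Fin a → V)} (hS : (orPow G a).IsNClique m S) (k : ℕ) :
    m ^ k ≤ (orPow G (a * k)).cliqueNum := by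
  obtain ⟨U, hU⟩ := exists_isNClique_orPow_mul hS k
  exact hU.card_eq ▸ hU.isClique.card_le_cliqueNum

theorem rpow_one_div_le_of_tendsto_cliqueNum_orPow [Finite V] {G : SimpleGraph V} {a m : ℕ}
    (ha : 0 < a) {S : Finset (Fin a → V)} (hS : (orPow G a).IsNClique m S) {L : ℝ}
    (hL : Tendsto (fun t : ℕ => ((orPow G t).cliqueNum : ℝ) ^ ((1 : ℝ) / t)) atTop (𝓝 L)) :
    (m : ℝ) ^ ((1 : ℝ) / a) ≤ L := by
  refine ge_of_tendsto (hL.comp (tendsto_id.const_mul_atTop' ha)) ?_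
  filter_upwards [eventually_gt_atTop 0] with k hk
  calc (m : ℝ) ^ ((1 : ℝ) / a) = ((m : ℝ) ^ k) ^ ((1 : ℝ) / (a * k : ℕ)) := by
        rw [← Real.rpow_natCast_mul (Nat.cast_nonneg m)]
        congr 1
        push_cast
        field_simp
    _ ≤ ((orPow G (a * k)).cliqueNum : ℝ) ^ ((1 : ℝ) / (a * k : ℕ)) := by
        gcongr
        exact_mod_cast pow_le_cliqueNum_orPow hS k

end OrPower

end SimpleGraph

open SimpleGraph

instance : DecidableRel C5.Adj := fun a b => inferInstanceAs (Decidable (a - b = 1 ∨ b - a = 1))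

instance : DecidableRel grotzsch.Adj := inferInstanceAs (DecidableRel (mycielskian C5).Adj)

namespace Grotzsch

def v (a : ZMod 5) : ZMod 5 ⊕ ZMod 5 ⊕ Unit := .inl a

def u (a : ZMod 5) : ZMod 5 ⊕ ZMod 5 ⊕ Unit := .inr (.inl a)

def z : ZMod 5 ⊕ ZMod 5 ⊕ Unit := .inr (.inr ())

/-- The point `((a, 2a), (b, 2b))` of the square of Shannon's clique `{(a, 2a)}` in `C₅ ⊠ C₅`,
with the first two coordinates lifted to twins if `a = b`, and otherwise the coordinate of
`(b, 2b)` in which it is adjacent to `(a, 2a)`. -/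
def liftedSquare (a b : ZMod 5) : Fin 4 → ZMod 5 ⊕ ZMod 5 ⊕ Unit :=
  if a = b then ![u a, u (2 * a), v b, v (2 * b)]
  else if C5.Adj a b then ![v a, v (2 * a), u b, v (2 * b)]
  else ![v a, v (2 * a), v b, u (2 * b)]

def clique : Finset (Fin 4 → ZMod 5 ⊕ ZMod 5 ⊕ Unit) :=
  Finset.univ.image (fun p : ZMod 5 × ZMod 5 => liftedSquare p.1 p.2) ∪
    {![u 0, z, z, z], ![z, u 0, z, z], ![z, z, z, z]}

theorem isNClique_clique : (orPow grotzsch 4).IsNClique 28 clique := by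
  decide

end Grotzsch

theorem sqrt_five_lt_rpow_one_div_four : Real.sqrt 5 < (28 : ℝ) ^ ((1 : ℝ) / 4) := by
  rw [one_div, Real.lt_rpow_inv_iff_of_pos (Real.sqrt_nonneg 5) (by norm_num) (by norm_num),
    Real.rpow_ofNat]
  nlinarith [Real.sq_sqrt (show (0 : ℝ) ≤ 5 by norm_num)]

/-- The fourth OR-power of the Grötzsch graph `M₄ = M(C₅)` contains a clique of
size 28; hence `C_OR(M₄) ≥ 28^{1/4} > √5 = C_OR(C₅)`. -/
theorem stmt_17 :
    (∃ S : Finset (Fin 4 → (ZMod 5 ⊕ ZMod 5 ⊕ Unit)), (orPow grotzsch 4).IsNClique 28 S) ∧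
    Real.sqrt 5 < (28 : ℝ) ^ ((1 : ℝ) / 4) ∧
    ∀ L : ℝ,
      Tendsto (fun t : ℕ => ((orPow grotzsch t).cliqueNum : ℝ) ^ ((1 : ℝ) / t))
        atTop (𝓝 L) →
      (28 : ℝ) ^ ((1 : ℝ) / 4) ≤ L :=
  ⟨⟨_, Grotzsch.isNClique_clique⟩, sqrt_five_lt_rpow_one_div_four, fun _ hL => by
    exact_mod_cast rpow_one_div_le_of_tendsto_cliqueNum_orPow four_pos
      Grotzsch.isNClique_clique hL⟩
end

section
/- Any finite triangle-free graph G is an induced subgraph of the r-th Mycielski graph M_r for all sufficiently large r; consequently sup{C_OR(G) : G triangle-free} = lim_{r→∞} C_OR(M_r). -/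
open Filter Topology

/-- The Shannon OR-capacity `C_OR(G) = lim_{t→∞} ω(G^t)^{1/t}`; by Fekete's lemma
(supermultiplicativity of the clique number under the OR-product) this limit exists
and equals the supremum `⨆ t, ω(G^{t+1})^{1/(t+1)}`, which we take as the definition. -/
noncomputable def COR {V : Type*} (G : SimpleGraph V) : ℝ :=
  ⨆ t : ℕ, ((orPow G (t + 1)).cliqueNum : ℝ) ^ ((1 : ℝ) / (t + 1))

/-- The vertex set of the iterated Mycielski graph, starting from `K₂`
(so `MycV r` carries the `(r+2)`-chromatic Mycielski graph `M_{r+2}`). -/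
def MycV : ℕ → Type
  | 0 => Fin 2
  | r + 1 => MycV r ⊕ MycV r ⊕ Unit

/-- The iterated Mycielski graphs: `MycG 0 = K₂` (`= M₂`) and
`MycG (r+1) = M(MycG r)`. -/
def MycG : (r : ℕ) → SimpleGraph (MycV r)
  | 0 => ⊤
  | r + 1 => mycielskian (MycG r)

/-!
Embed a triangle-free graph `G` by induction on its number of vertices. Remove a vertex `x`,
embed the rest into `M_r` by `φ`, and extend to `M(M_r)` by sending `x` to the apex `z`, each
neighbour `v` of `x` to the twin `u_{φ v}`, and every other vertex `v` to `φ v`. A twin is adjacent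
exactly to `z` and to the neighbours of its original, and the neighbours of `x` are pairwise
non-adjacent because `G` is triangle-free, so this is again an induced embedding.

The OR-capacity is monotone under induced embeddings into finite graphs. Hence `C_OR(M_r)` is
nondecreasing in `r` (as `M_r` is induced in `M_{r+1}`), it is at most the supremum over
triangle-free graphs (as `M_r` is triangle-free), and every triangle-free graph is dominated by some
`M_r`.
-/

open Sum

section Mycielskian

variable {V W : Type*} {G : SimpleGraph V} {H : SimpleGraph W}

@[simp] lemma mycielskian_adj_inl_inl {x y : V} :
    (mycielskian G).Adj (inl x) (inl y) ↔ G.Adj x y := by simp [mycielskian]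

@[simp] lemma mycielskian_adj_inl_inr_inl {x y : V} :
    (mycielskian G).Adj (inl x) (inr (inl y)) ↔ G.Adj x y := by simp [mycielskian]

@[simp] lemma mycielskian_adj_inr_inl_inl {x y : V} :
    (mycielskian G).Adj (inr (inl x)) (inl y) ↔ G.Adj x y := by simp [mycielskian]

@[simp] lemma mycielskian_not_adj_inr_inl_inr_inl {x y : V} :
    ¬ (mycielskian G).Adj (inr (inl x)) (inr (inl y)) := by simp [mycielskian]

@[simp] lemma mycielskian_adj_inr_inl_apex {x : V} :
    (mycielskian G).Adj (inr (inl x)) (inr (inr ())) := by simp [mycielskian]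

@[simp] lemma mycielskian_adj_apex_inr_inl {x : V} :
    (mycielskian G).Adj (inr (inr ())) (inr (inl x)) := by simp [mycielskian]

@[simp] lemma mycielskian_not_adj_inl_apex {x : V} :
    ¬ (mycielskian G).Adj (inl x) (inr (inr ())) := by simp [mycielskian]

@[simp] lemma mycielskian_not_adj_apex_inl {x : V} :
    ¬ (mycielskian G).Adj (inr (inr ())) (inl x) := by simp [mycielskian]

theorem cliqueFree_three_iff :
    G.CliqueFree 3 ↔ ∀ a b c, G.Adj a b → G.Adj a c → G.Adj b c → False := by
  classical
  simp only [SimpleGraph.CliqueFree, SimpleGraph.is3Clique_iff]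
  constructor
  · intro h a b c hab hac hbc
    exact h _ ⟨a, b, c, hab, hac, hbc, rfl⟩
  · rintro h s ⟨a, b, c, hab, hac, hbc, -⟩
    exact h a b c hab hac hbc

theorem mycielskian_cliqueFree_three (hG : G.CliqueFree 3) : (mycielskian G).CliqueFree 3 := by
  rw [cliqueFree_three_iff] at hG ⊢
  rintro (a | a | ⟨⟨⟩⟩) (b | b | ⟨⟨⟩⟩) (c | c | ⟨⟨⟩⟩) <;> simp <;> exact hG _ _ _

def mycielskianInl (G : SimpleGraph V) : G ↪g mycielskian G :=
  ⟨⟨inl, inl_injective⟩, mycielskian_adj_inl_inl⟩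

theorem nonempty_embedding_mycielskian {G : SimpleGraph (Option V)} (hG : G.CliqueFree 3)
    (φ : G.comap some ↪g H) : Nonempty (G ↪g mycielskian H) := by
  classical
  let f : Option V → W ⊕ W ⊕ Unit
    | none => inr (inr ())
    | some v => if G.Adj none (some v) then inr (inl (φ v)) else inl (φ v)
  -- Collapsing every twin onto its original turns `f` into `Option.map φ`; hence `f` is injective.
  have hproj : Sum.elim some (Sum.elim some fun _ => none) ∘ f = Option.map φ := by
    funext a
    rcases a with _ | v
    · rfl
    · simp only [Function.comp, f]; split_ifs <;> rfl
  have hφ : ∀ v w, H.Adj (φ v) (φ w) ↔ G.Adj (some v) (some w) := fun v w => φ.map_adj_iff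
  have htwins (v w : V) (hv : G.Adj none (some v)) (hw : G.Adj none (some w)) :
      ¬ G.Adj (some v) (some w) := fun hvw =>
    SimpleGraph.isIndepSet_neighborSet_of_triangleFree G hG none hv hw hvw.ne hvw
  refine ⟨⟨⟨f, .of_comp (hproj ▸ Option.map_injective φ.injective)⟩, @fun a b => ?_⟩⟩
  rcases a with _ | v <;> rcases b with _ | w <;> simp only [f, Function.Embedding.coeFn_mk] <;>
    (try split_ifs) <;> simp [*, G.adj_comm]

end Mycielskian

instance MycV.instFintype : ∀ r, Fintype (MycV r)
  | 0 => inferInstanceAs (Fintype (Fin 2))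
  | r + 1 =>
    letI := MycV.instFintype r
    inferInstanceAs (Fintype (MycV r ⊕ MycV r ⊕ Unit))

theorem mycG_cliqueFree_three : ∀ r, (MycG r).CliqueFree 3
  | 0 => SimpleGraph.cliqueFree_of_card_lt (by decide)
  | r + 1 => mycielskian_cliqueFree_three (mycG_cliqueFree_three r)

theorem nonempty_mycG_embedding_of_le {r s : ℕ} (h : r ≤ s) : Nonempty (MycG r ↪g MycG s) := by
  induction s, h using Nat.le_induction with
  | base => exact ⟨.refl⟩
  | succ s _ ih => exact ⟨(mycielskianInl (MycG s)).comp ih.some⟩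

theorem nonempty_embedding_mycG (n : ℕ) (G : SimpleGraph (Fin n)) (hG : G.CliqueFree 3) :
    Nonempty (G ↪g MycG n) := by
  induction n with
  | zero => exact ⟨⟨.ofIsEmpty, fun {a} => a.elim0⟩⟩
  | succ n ih =>
    let e := finSuccEquiv n
    let G' : SimpleGraph (Option (Fin n)) := G.comap e.symm
    have iso : G' ≃g G := ⟨e.symm, Iff.rfl⟩
    have hG' : G'.CliqueFree 3 := hG.comap iso.isContained
    obtain ⟨φ⟩ :=
      ih (G'.comap some) (hG'.comap (SimpleGraph.Embedding.comap .some G').isContained)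
    obtain ⟨ψ⟩ := nonempty_embedding_mycielskian hG' φ
    exact ⟨ψ.comp iso.symm.toEmbedding⟩

section Capacity

variable {V W : Type*} {G : SimpleGraph V} {H : SimpleGraph W}

def orPowEmbedding (f : G ↪g H) (t : ℕ) : orPow G t ↪g orPow H t where
  toEmbedding := f.toEmbedding.arrowCongrRight
  map_rel_iff' := by simp [orPow, f.injective.comp_left.eq_iff]

theorem cliqueNum_le_card [Fintype V] (G : SimpleGraph V) : G.cliqueNum ≤ Fintype.card V := by
  obtain ⟨s, hs⟩ := G.exists_isNClique_cliqueNum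
  exact hs.card_eq ▸ s.card_le_univ

theorem cliqueNum_le_of_embedding [Finite W] (f : G ↪g H) : G.cliqueNum ≤ H.cliqueNum := by
  obtain ⟨s, hs⟩ := G.exists_isNClique_cliqueNum
  have hclique : H.IsClique (s.map f.toEmbedding) := by
    rw [Finset.coe_map]
    rintro _ ⟨a, ha, rfl⟩ _ ⟨b, hb, rfl⟩ hne
    exact f.map_adj_iff.2 (hs.isClique ha hb (ne_of_apply_ne _ hne))
  calc G.cliqueNum = (s.map f.toEmbedding).card := by rw [Finset.card_map, hs.card_eq]
    _ ≤ H.cliqueNum := hclique.card_le_cliqueNum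

theorem orPow_cliqueNum_rpow_le_card [Fintype W] (H : SimpleGraph W) (t : ℕ) :
    ((orPow H (t + 1)).cliqueNum : ℝ) ^ ((1 : ℝ) / (t + 1)) ≤ Fintype.card W := by
  classical
  have hcard : (orPow H (t + 1)).cliqueNum ≤ Fintype.card W ^ (t + 1) := by
    simpa using cliqueNum_le_card (orPow H (t + 1))
  calc ((orPow H (t + 1)).cliqueNum : ℝ) ^ ((1 : ℝ) / (t + 1))
      ≤ ((Fintype.card W : ℝ) ^ (t + 1)) ^ (((t + 1 : ℕ) : ℝ)⁻¹) := by
        rw [one_div, Nat.cast_succ]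
        gcongr
        exact_mod_cast hcard
    _ = Fintype.card W := Real.pow_rpow_inv_natCast (by positivity) t.succ_ne_zero

theorem COR_le_of_embedding [Finite W] (f : G ↪g H) : COR G ≤ COR H := by
  have := Fintype.ofFinite W
  refine ciSup_mono ⟨Fintype.card W, ?_⟩ fun t => ?_
  · rintro _ ⟨t, rfl⟩
    exact orPow_cliqueNum_rpow_le_card H t
  · gcongr
    exact cliqueNum_le_of_embedding (orPowEmbedding f (t + 1))

end Capacity

/-- Every finite triangle-free graph embeds as an induced subgraph into all
sufficiently large Mycielski graphs; consequently the supremum of the Shannon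
OR-capacities of triangle-free graphs equals `lim_{r→∞} C_OR(M_r)`, the limit of the
(monotone) Shannon OR-capacities of the Mycielski graphs. -/
theorem stmt_19 :
    (∀ (n : ℕ) (G : SimpleGraph (Fin n)), G.CliqueFree 3 →
      ∃ r0 : ℕ, ∀ r, r0 ≤ r → Nonempty (G ↪g MycG r)) ∧
    (⨆ p : {p : Σ n : ℕ, SimpleGraph (Fin n) // p.2.CliqueFree 3},
        ENNReal.ofReal (COR p.1.2)) = (⨆ r : ℕ, ENNReal.ofReal (COR (MycG r))) ∧
    Tendsto (fun r : ℕ => ENNReal.ofReal (COR (MycG r))) atTop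
      (𝓝 (⨆ r : ℕ, ENNReal.ofReal (COR (MycG r)))) := by
  have hmono : Monotone fun r => ENNReal.ofReal (COR (MycG r)) := fun r s hrs =>
    ENNReal.ofReal_le_ofReal (COR_le_of_embedding (nonempty_mycG_embedding_of_le hrs).some)
  refine ⟨fun n G hG => ⟨n, fun r hr => ?_⟩, le_antisymm ?_ ?_, tendsto_atTop_iSup hmono⟩
  · obtain ⟨φ⟩ := nonempty_embedding_mycG n G hG
    obtain ⟨ψ⟩ := nonempty_mycG_embedding_of_le hr
    exact ⟨ψ.comp φ⟩
  · refine iSup_le fun ⟨⟨n, G⟩, hG⟩ => le_iSup_of_le n ?_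
    exact ENNReal.ofReal_le_ofReal (COR_le_of_embedding (nonempty_embedding_mycG n G hG).some)
  · refine iSup_le fun r => ?_
    let e := (MycG r).overFinIso rfl
    have hfree : ((MycG r).overFin rfl).CliqueFree 3 :=
      (mycG_cliqueFree_three r).comap e.isContained'
    refine le_iSup_of_le ⟨⟨_, (MycG r).overFin rfl⟩, hfree⟩ ?_
    exact ENNReal.ofReal_le_ofReal (COR_le_of_embedding e.toEmbedding)
end
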